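/- arXiv:2203.06804 — 13 statements merged into one kernel-verified Lean document; each statement's English description precedes it below -/
import Mathlib

section
/- In Wordle with words of any fixed index set I over a finite alphabet of n letters and any nonempty dictionary, the codebreaker has a strategy that wins within n guesses: there is a sequence of at most n guesswords (chosen adaptively using only the 'green' positional feedback) such that the final guess equals the hidden codeword. -/
/-- The set of candidates still consistent with the green feedback after `k` guesses,
when the guess from a candidate set `S` is `pick S` and the hidden word is `w`. -/
def wordleC {α I : Type*} (Δ : Set (I → α)) (pick : Set (I → α) → (I → α))
    (w : I → α) : ℕ → Set (I → α)
  | 0 => Δ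
  | k+1 => {v ∈ wordleC Δ pick w k |
      ∀ i, (pick (wordleC Δ pick w k) i = v i ↔ pick (wordleC Δ pick w k) i = w i)}

/-- Infinite Wordle over a finite alphabet of `n` letters: for any nonempty
dictionary `Δ ⊆ I → α`, there is an adaptive strategy (using only the green
positional feedback) winning within `n` guesses. `G w k` is the `k`-th guess
made when the hidden codeword is `w`; adaptivity says the guess depends only on
the green feedback of earlier guesses. -/
theorem wordle_finite_alphabet_wins_in_n (α I : Type*) [Fintype α] (n : ℕ)
    (hcard : Fintype.card α = n) (hn : 1 ≤ n)
    (Δ : Set (I → α)) (hΔ : Δ.Nonempty) :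
    ∃ G : (I → α) → ℕ → (I → α),
      (∀ w ∈ Δ, ∀ k : ℕ, G w k ∈ Δ) ∧
      (∀ w ∈ Δ, ∀ w' ∈ Δ, ∀ k : ℕ,
        (∀ j < k, {i : I | G w j i = w i} = {i : I | G w' j i = w' i}) →
          G w k = G w' k) ∧
      (∀ w ∈ Δ, ∃ k < n, G w k = w) := by
  classical
  set pick : Set (I → α) → (I → α) :=
    fun S => if h : S.Nonempty then h.some else hΔ.some with hpickdef
  have hpickmem : ∀ S : Set (I → α), S.Nonempty → pick S ∈ S := by
    intro S h
    simp only [hpickdef, dif_pos h]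
    exact h.some_mem
  set C : (I → α) → ℕ → Set (I → α) := wordleC Δ pick with hC
  -- the hidden word stays a candidate
  have hmem : ∀ w ∈ Δ, ∀ k, w ∈ C w k := by
    intro w hw k
    induction k with
    | zero => exact hw
    | succ k ih => exact ⟨ih, fun i => Iff.rfl⟩
  have hsub : ∀ w k, C w k ⊆ Δ := by
    intro w k
    induction k with
    | zero => exact le_refl _
    | succ k ih => exact (Set.sep_subset _ _).trans ih
  have hne : ∀ w ∈ Δ, ∀ k, (C w k).Nonempty := fun w hw k => ⟨w, hmem w hw k⟩
  have hGmem : ∀ w ∈ Δ, ∀ k, pick (C w k) ∈ C w k :=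
    fun w hw k => hpickmem _ (hne w hw k)
  -- candidate sets are decreasing
  have hdec : ∀ w k j, j ≤ k → C w k ⊆ C w j := by
    intro w k
    induction k with
    | zero => intro j hj; simp_all
    | succ k ih =>
      intro j hj
      rcases Nat.lt_or_ge j (k+1) with h | h
      · exact (Set.sep_subset _ _).trans (ih j (Nat.lt_succ_iff.mp h))
      · have : j = k + 1 := le_antisymm hj h
        subst this; exact le_refl _
  -- key consistency fact
  have hkey : ∀ w ∈ Δ, ∀ k j, j < k → ∀ v ∈ C w k, ∀ i,
      (pick (C w j) i = v i ↔ pick (C w j) i = w i) := by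
    intro w hw k j hj v hv i
    have hv' : v ∈ C w (j+1) := hdec w k (j+1) hj hv
    exact hv'.2 i
  -- adaptivity of the candidate sets
  have hadapt : ∀ w ∈ Δ, ∀ w' ∈ Δ, ∀ k,
      (∀ j < k, {i : I | pick (C w j) i = w i} = {i : I | pick (C w' j) i = w' i}) →
        C w k = C w' k := by
    intro w hw w' hw' k
    induction k with
    | zero => intro _; rfl
    | succ k ih =>
      intro h
      have hCk : C w k = C w' k := ih (fun j hj => h j (Nat.lt_succ_of_lt hj))
      have hfb := h k (Nat.lt_succ_self k)
      have hfb' : ∀ i, (pick (C w k) i = w i ↔ pick (C w' k) i = w' i) := by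
        intro i
        have := Set.ext_iff.mp hfb i
        simpa using this
      show wordleC Δ pick w (k+1) = wordleC Δ pick w' (k+1)
      ext v
      simp only [wordleC, Set.mem_setOf_eq, Set.mem_sep_iff]
      rw [show wordleC Δ pick w k = C w k from rfl,
        show wordleC Δ pick w' k = C w' k from rfl, hCk]
      constructor
      · rintro ⟨hv, hiff⟩
        refine ⟨hv, fun i => ?_⟩
        have h2 := hfb' i
        rw [hCk] at h2
        exact (hiff i).trans h2
      · rintro ⟨hv, hiff⟩
        refine ⟨hv, fun i => ?_⟩
        have h2 := hfb' i
        rw [hCk] at h2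
        exact (hiff i).trans h2.symm
  refine ⟨fun w k => pick (C w k), ?_, ?_, ?_⟩
  · intro w hw k
    exact hsub w k (hGmem w hw k)
  · intro w hw w' hw' k hfb
    have h2 := hadapt w hw w' hw' k hfb
    show pick (C w k) = pick (C w' k)
    rw [h2]
  · intro w hw
    refine ⟨n - 1, Nat.sub_lt hn one_pos, ?_⟩
    set v : I → α := pick (C w (n-1)) with hvdef
    have hv : v ∈ C w (n-1) := hGmem w hw (n-1)
    funext i
    by_cases hA : ∃ j, j < n - 1 ∧ pick (C w j) i = w i
    · obtain ⟨j, hj, hg⟩ := hA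
      have hiff := hkey w hw (n-1) j hj v hv i
      have h2 : pick (C w j) i = v i := hiff.mpr hg
      show v i = w i
      rw [← h2, hg]
    · push_neg at hA
      -- all previous guesses were wrong at position i, with distinct letters
      set f : Fin n → α := fun j =>
        if h : (j : ℕ) < n - 1 then pick (C w j) i else w i with hfdef
      have hinj : Function.Injective f := by
        intro a b hab
        by_contra hne
        have hne' : (a : ℕ) ≠ (b : ℕ) := fun h => hne (Fin.ext h)
        simp only [hfdef] at hab
        rcases Nat.lt_or_ge (a : ℕ) (n-1) with ha | ha <;>
          rcases Nat.lt_or_ge (b : ℕ) (n-1) with hb | hb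
        · rw [dif_pos ha, dif_pos hb] at hab
          rcases lt_trichotomy (a : ℕ) (b : ℕ) with h | h | h
          · have := hkey w hw (b : ℕ) (a : ℕ) h (pick (C w b)) (hGmem w hw b) i
            exact hA a ha (this.mp hab)
          · exact hne' h
          · have := hkey w hw (a : ℕ) (b : ℕ) h (pick (C w a)) (hGmem w hw a) i
            exact hA b hb (this.mp hab.symm)
        · rw [dif_pos ha, dif_neg (not_lt.mpr hb)] at hab
          exact hA a ha hab
        · rw [dif_neg (not_lt.mpr ha), dif_pos hb] at hab
          exact hA b hb hab.symm
        · have ha' : (a : ℕ) = n - 1 := le_antisymm (Nat.le_sub_one_of_lt a.isLt) ha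
          have hb' : (b : ℕ) = n - 1 := le_antisymm (Nat.le_sub_one_of_lt b.isLt) hb
          exact hne' (ha'.trans hb'.symm)
      have hbij : Function.Bijective f :=
        (Fintype.bijective_iff_injective_and_card f).mpr
          ⟨hinj, by simp [hcard]⟩
      obtain ⟨j, hj⟩ := hbij.2 (v i)
      rcases Nat.lt_or_ge (j : ℕ) (n-1) with hjlt | hjge
      · exfalso
        simp only [hfdef, dif_pos hjlt] at hj
        have hiff := hkey w hw (n-1) (j : ℕ) hjlt v hv i
        exact hA j hjlt (hiff.mp hj)
      · simp only [hfdef, dif_neg (not_lt.mpr hjge)] at hj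
        exact hj.symm
end

section
/- The class of infinite Wordle dictionaries over a fixed alphabet for which the codebreaker has a strategy always winning at a finite stage is closed under countable unions: if Δ = ⋃ₙ Δₙ and for each n the codebreaker has a finite-stage winning strategy for Δₙ, then the codebreaker has a finite-stage winning strategy for Δ. -/
/-- The codebreaker has a finite-stage winning adaptive strategy for the
dictionary `Δ`: guesses come from `Δ`, depend only on the green positional
feedback of earlier guesses, and every codeword of `Δ` is guessed at some
finite stage. -/
def FiniteStageWin (α : Type*) (Δ : Set (ℕ → α)) : Prop :=
  ∃ G : (ℕ → α) → ℕ → (ℕ → α),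
    (∀ w ∈ Δ, ∀ k : ℕ, G w k ∈ Δ) ∧
    (∀ w ∈ Δ, ∀ w' ∈ Δ, ∀ k : ℕ,
      (∀ j < k, {i : ℕ | G w j i = w i} = {i : ℕ | G w' j i = w' i}) →
        G w k = G w' k) ∧
    (∀ w ∈ Δ, ∃ k : ℕ, G w k = w)

/-- The class of infinite Wordle dictionaries over a fixed alphabet for which
the codebreaker can always win at a finite stage is closed under countable
unions. -/
theorem wordle_finite_win_countable_union (α : Type*) (Δn : ℕ → Set (ℕ → α))
    (h : ∀ n : ℕ, FiniteStageWin α (Δn n)) :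
    FiniteStageWin α (⋃ n, Δn n) := by
  classical
  choose G hmem hcons hwin using h
  by_cases hΔ : (⋃ n, Δn n).Nonempty
  · obtain ⟨d, hd⟩ := hΔ
    -- consistency sets: words of `Δn n` whose own feedback to the `Δn n`-strategy
    -- agrees with the feedback `w` would give, for the first `k` guesses
    set C : ℕ → (ℕ → α) → ℕ → Set (ℕ → α) := fun n w k =>
      {v | v ∈ Δn n ∧ ∀ j < k, {i | G n v j i = v i} = {i | G n v j i = w i}} with hCdef
    have hCmem : ∀ n w k v, v ∈ C n w k ↔
        (v ∈ Δn n ∧ ∀ j < k, {i | G n v j i = v i} = {i | G n v j i = w i}) := by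
      intro n w k v; rfl
    have hCmono : ∀ n w j k, j ≤ k → C n w k ⊆ C n w j := by
      intro n w j k hjk v hv
      exact ⟨hv.1, fun j' hj' => hv.2 j' (lt_of_lt_of_le hj' hjk)⟩
    -- any two consistent words produce the same guesses
    have key : ∀ n w k, ∀ v ∈ C n w k, ∀ v' ∈ C n w k, ∀ j, j ≤ k → G n v j = G n v' j := by
      intro n w k v hv v' hv' j
      induction j using Nat.strong_induction_on with
      | _ j ih =>
        intro hj
        apply hcons n v hv.1 v' hv'.1 j
        intro j' hj'
        rw [hv.2 j' (lt_of_lt_of_le hj' hj), hv'.2 j' (lt_of_lt_of_le hj' hj),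
          ih j' hj' (le_trans hj'.le hj)]
    -- the interleaved strategy
    set Gbig : (ℕ → α) → ℕ → (ℕ → α) := fun w m =>
      if hne : (C m.unpair.1 w m.unpair.2).Nonempty
      then G m.unpair.1 hne.some m.unpair.2 else d with hGbigdef
    have Gdef : ∀ w m, Gbig w m =
        if hne : (C m.unpair.1 w m.unpair.2).Nonempty
        then G m.unpair.1 hne.some m.unpair.2 else d := fun _ _ => rfl
    -- consistent word
    have played : ∀ n w j, ∀ v ∈ C n w j, Gbig w (Nat.pair n j) = G n v j := by
      intro n w j v hv
      have hne : (C n w j).Nonempty := ⟨v, hv⟩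
      rw [Gdef]
      simp only [Nat.unpair_pair]
      rw [dif_pos hne]
      exact key n w j _ hne.some_mem v hv j le_rfl
    -- adaptivity of Gbig
    have main : ∀ m, ∀ w, w ∈ (⋃ n, Δn n) → ∀ w', w' ∈ (⋃ n, Δn n) →
        (∀ j < m, {i | Gbig w j i = w i} = {i | Gbig w' j i = w' i}) →
        Gbig w m = Gbig w' m := by
      intro m
      induction m using Nat.strong_induction_on with
      | _ m ih =>
        intro w hw w' hw' hfb
        set n := m.unpair.1 with hn
        set k := m.unpair.2 with hk
        have hm : Nat.pair n k = m := Nat.pair_unpair m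
        have dir : ∀ u, u ∈ (⋃ n, Δn n) → ∀ u', u' ∈ (⋃ n, Δn n) →
            (∀ j < m, {i | Gbig u j i = u i} = {i | Gbig u' j i = u' i}) →
            C n u k ⊆ C n u' k := by
          intro u hu u' hu' hfbu v hv
          refine ⟨hv.1, fun j hj => ?_⟩
          have hm' : Nat.pair n j < m := by
            rw [← hm]; exact Nat.pair_lt_pair_right n hj
          have hvj : v ∈ C n u j := hCmono n u j k hj.le hv
          have hplay : Gbig u (Nat.pair n j) = G n v j := played n u j v hvj
          have e1 : Gbig u' (Nat.pair n j) = G n v j := by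
            rw [ih _ hm' u' hu' u hu (fun j' hj' => (hfbu j' (hj'.trans hm')).symm)]
            exact hplay
          have s1 : {i | G n v j i = u i} = {i | Gbig u (Nat.pair n j) i = u i} := by
            rw [hplay]
          have s2 : {i | Gbig u' (Nat.pair n j) i = u' i} = {i | G n v j i = u' i} := by
            rw [e1]
          calc {i | G n v j i = v i} = {i | G n v j i = u i} := hv.2 j hj
            _ = {i | Gbig u (Nat.pair n j) i = u i} := s1
            _ = {i | Gbig u' (Nat.pair n j) i = u' i} := hfbu _ hm'
            _ = {i | G n v j i = u' i} := s2
        have hCeq : C n w k = C n w' k :=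
          Set.Subset.antisymm (dir w hw w' hw' hfb)
            (dir w' hw' w hw (fun j hj => (hfb j hj).symm))
        rw [Gdef, Gdef]
        by_cases hne : (C n w k).Nonempty
        · have hne' : (C n w' k).Nonempty := hCeq ▸ hne
          rw [dif_pos hne, dif_pos hne']
          have h2 : hne'.some ∈ C n w k := by rw [hCeq]; exact hne'.some_mem
          exact key n w k _ hne.some_mem _ h2 k le_rfl
        · have hne' : ¬ (C n w' k).Nonempty := hCeq ▸ hne
          rw [dif_neg hne, dif_neg hne']
    refine ⟨Gbig, ?_, ?_, ?_⟩
    · intro w hw k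
      rw [Gdef]
      by_cases hne : (C k.unpair.1 w k.unpair.2).Nonempty
      · rw [dif_pos hne]
        exact Set.mem_iUnion.2 ⟨k.unpair.1, hmem _ _ hne.some_mem.1 _⟩
      · rw [dif_neg hne]; exact hd
    · intro w hw w' hw' k hfb
      exact main k w hw w' hw' hfb
    · intro w hw
      obtain ⟨n, hwn⟩ := Set.mem_iUnion.1 hw
      obtain ⟨k, hk⟩ := hwin n w hwn
      have hself : w ∈ C n w k := ⟨hwn, fun j _ => rfl⟩
      exact ⟨Nat.pair n k, by rw [played n w k w hself, hk]⟩
  · refine ⟨fun w _ => w, ?_, ?_, ?_⟩ <;> intro w hw <;> exact absurd ⟨w, hw⟩ hΔ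
end

section
/- In infinite Wordle with the complete dictionary of all words ℕ → Σ over a countably infinite alphabet Σ, the codebreaker has no strategy guaranteeing a win at a finite stage: for every strategy there exists a codeword w and a play consistent with the Wordle feedback for w such that no finite-stage guess equals w. -/
/-!
The adversary builds a bijective codeword `w : ℕ → α` in stages, committing finitely many
positions at each stage and promising that every position still uncommitted after the `k`-th
guess `g` will differ from `g` there. For a bijective codeword the green and yellow sets of `g`
are then fixed by the committed part: the unique occurrence of a letter counts as misplaced
exactly when it lies outside it. The promise must leave each uncommitted letter infinitely many
admissible positions; by pigeonhole a new guess takes this away from only finitely many letters,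
and these are committed at once. Running the strategy against this adversary, every guess sees
the same feedback as against the final codeword, and the `k`-th guess differs from `w` at every
position committed after stage `k`.
-/

/-- Green feedback: the set of positions where the guess `s` is correct for
the codeword `w`. -/
def greenSet {α : Type*} (s w : ℕ → α) : Set ℕ := {i : ℕ | s i = w i}

/-- Yellow feedback: a misplaced letter at position `i` is marked yellow iff
the number of earlier misplaced occurrences of that letter in the guess is
smaller than the number of occurrences of that letter in the codeword at
non-green positions (so the first `k` misplaced occurrences are yellow when
`k` additional such letters appear elsewhere in the codeword). -/
def yellowSet {α : Type*} (s w : ℕ → α) : Set ℕ :=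
  {i : ℕ | s i ≠ w i ∧
    Cardinal.mk {j : ℕ | j < i ∧ s j = s i ∧ s j ≠ w j} <
      Cardinal.mk {j : ℕ | w j = s i ∧ s j ≠ w j}}

namespace InfiniteWordle

open Function Set

variable {α : Type*}

theorem feedback_eq_of_eqOn {g u v : ℕ → α} {K : Set ℕ} (hu : Bijective u) (hv : Bijective v)
    (huv : EqOn u v K) (hgu : ∀ m ∉ K, g m ≠ u m) (hgv : ∀ m ∉ K, g m ≠ v m) :
    greenSet g u = greenSet g v ∧ yellowSet g u = yellowSet g v := by
  have hgreen : ∀ i, g i = u i ↔ g i = v i := fun i => by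
    by_cases hi : i ∈ K
    · rw [huv hi]
    · exact iff_of_false (hgu i hi) (hgv i hi)
  have hmisplaced : ∀ c, Cardinal.mk {j | u j = c ∧ g j ≠ u j} =
      Cardinal.mk {j | v j = c ∧ g j ≠ v j} := by
    intro c
    obtain ⟨p, rfl⟩ := hu.2 c
    obtain ⟨q, hq⟩ := hv.2 (u p)
    have hu' : ∀ j, u j = u p ↔ j = p := fun j => hu.1.eq_iff
    have hv' : ∀ j, v j = u p ↔ j = q := fun j => by rw [← hq]; exact hv.1.eq_iff
    simp only [hu', hv']
    by_cases hpq : p = q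
    · subst hpq
      simp only [ne_eq, hgreen]
    -- otherwise neither position is constrained, so both misplaced letters are counted once
    have hp : p ∉ K := fun hp => hpq (hv.1 (by rw [← huv hp, hq]))
    have hq' : q ∉ K := fun hqK => hpq (hu.1 (by rw [huv hqK, hq])).symm
    have hsingle : ∀ (w : ℕ → α) (r : ℕ), g r ≠ w r → {j | j = r ∧ g j ≠ w j} = {r} :=
      fun w r hr => by
        ext j
        simp only [mem_ofPred_eq, mem_singleton_iff, and_iff_left_iff_imp]
        rintro rfl
        exact hr
    rw [hsingle u p (hgu p hp), hsingle v q (hgv q hq'), Cardinal.mk_singleton,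
      Cardinal.mk_singleton]
  refine ⟨ext fun i => hgreen i, ext fun i => ?_⟩
  simp only [yellowSet, mem_ofPred_eq]
  rw [hmisplaced]
  simp only [ne_eq, hgreen]

def keys (P : List (ℕ × α)) : Set ℕ := {m | ∃ a, (m, a) ∈ P}

def vals (P : List (ℕ × α)) : Set α := {a | ∃ m, (m, a) ∈ P}

theorem keys_finite (P : List (ℕ × α)) : (keys P).Finite :=
  (P.finite_toSet.image Prod.fst).subset fun m ⟨a, h⟩ => ⟨(m, a), h, rfl⟩

theorem vals_finite (P : List (ℕ × α)) : (vals P).Finite :=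
  (P.finite_toSet.image Prod.snd).subset fun a ⟨m, h⟩ => ⟨(m, a), h, rfl⟩

theorem keys_mono {P Q : List (ℕ × α)} (h : P ⊆ Q) : keys P ⊆ keys Q :=
  fun _ ⟨a, ha⟩ => ⟨a, h ha⟩

theorem vals_mono {P Q : List (ℕ × α)} (h : P ⊆ Q) : vals P ⊆ vals Q :=
  fun _ ⟨m, hm⟩ => ⟨m, h hm⟩

def IsPartialInj (P : List (ℕ × α)) : Prop :=
  ∀ x ∈ P, ∀ y ∈ P, (x.1 = y.1 ↔ x.2 = y.2)

theorem IsPartialInj.cons {P : List (ℕ × α)} (hP : IsPartialInj P) {m : ℕ} {a : α}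
    (hm : m ∉ keys P) (ha : a ∉ vals P) : IsPartialInj ((m, a) :: P) := by
  have hfresh : ∀ y ∈ P, m ≠ y.1 ∧ a ≠ y.2 := fun y hy =>
    ⟨fun h => hm ⟨y.2, h ▸ hy⟩, fun h => ha ⟨y.1, h ▸ hy⟩⟩
  rintro x (_ | ⟨_, hx⟩) y (_ | ⟨_, hy⟩)
  · exact iff_of_true rfl rfl
  · exact iff_of_false (hfresh y hy).1 (hfresh y hy).2
  · exact iff_of_false (hfresh x hx).1.symm (hfresh x hx).2.symm
  · exact hP x hx y hy

/-- The positions at which the letter `c` can still be committed without agreeing with any guess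
in `L` there. -/
def slots (K : Set ℕ) (L : List (ℕ → α)) (c : α) : Set ℕ :=
  {m | m ∉ K ∧ ∀ g ∈ L, g m ≠ c}

theorem slots_infinite_of_subset {K K' : Set ℕ} (hK' : K'.Finite) {L : List (ℕ → α)} {c : α}
    (h : (slots K L c).Infinite) : (slots K' L c).Infinite :=
  (h.sdiff hK').mono fun _ hm => ⟨hm.2, hm.1.2⟩

theorem finite_setOf_slots_finite {K : Set ℕ} (hK : K.Finite) (L : List (ℕ → α)) :
    {c | (slots K L c).Finite}.Finite := by
  classical
  by_contra hinf
  obtain ⟨F, hF, hcard⟩ := Set.not_finite.mp hinf |>.exists_subset_card_eq (L.length + 1)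
  have hU : (K ∪ ⋃ c ∈ F, slots K L c).Finite :=
    hK.union (F.finite_toSet.biUnion fun c hc => hF hc)
  obtain ⟨m, hm⟩ := hU.infinite_compl.nonempty
  simp only [mem_compl_iff, mem_union, mem_iUnion, not_or, not_exists] at hm
  -- each letter of `F` has no slot at `m`, so it is one of the at most `|L|` letters shown there
  have hsub : F ⊆ (L.map (· m)).toFinset := fun c hc => by
    have : ¬ ∀ g ∈ L, g m ≠ c := fun h => hm.2 c hc ⟨hm.1, h⟩
    simpa [List.mem_map] using this
  have := (Finset.card_le_card hsub).trans (List.toFinset_card_le _)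
  simp only [hcard, List.length_map] at this
  omega

def Admissible (P : List (ℕ × α)) (L : List (ℕ → α)) : Prop :=
  IsPartialInj P ∧ ∀ c ∉ vals P, (slots (keys P) L c).Infinite

theorem admissible_nil : Admissible ([] : List (ℕ × α)) [] := by
  refine ⟨fun _ h => absurd h List.not_mem_nil, fun c _ => ?_⟩
  convert Set.infinite_univ (α := ℕ)
  ext m
  simp [slots, keys]

theorem Admissible.of_subset {P Q : List (ℕ × α)} {L : List (ℕ → α)} (hP : Admissible P L)
    (hQ : IsPartialInj Q) (hPQ : P ⊆ Q) : Admissible Q L :=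
  ⟨hQ, fun c hc => slots_infinite_of_subset (keys_finite Q)
    (hP.2 c fun h => hc (vals_mono hPQ h))⟩

def Extends (L : List (ℕ → α)) (P Q : List (ℕ × α)) : Prop :=
  P ⊆ Q ∧ ∀ x ∈ Q, x ∉ P → ∀ g ∈ L, g x.1 ≠ x.2

theorem Extends.refl (L : List (ℕ → α)) (P : List (ℕ × α)) : Extends L P P :=
  ⟨List.Subset.refl P, fun _ hx hxP => absurd hx hxP⟩

theorem Extends.trans {L : List (ℕ → α)} {P Q R : List (ℕ × α)} (hPQ : Extends L P Q)
    (hQR : Extends L Q R) : Extends L P R :=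
  ⟨List.Subset.trans hPQ.1 hQR.1, fun x hx hxP => by
    by_cases hxQ : x ∈ Q
    · exact hPQ.2 x hxQ hxP
    · exact hQR.2 x hx hxQ⟩

theorem Extends.mono {L L' : List (ℕ → α)} {P Q : List (ℕ × α)} (h : Extends L' P Q)
    (hL : L ⊆ L') : Extends L P Q :=
  ⟨h.1, fun x hx hxP g hg => h.2 x hx hxP g (hL hg)⟩

theorem extends_cons {L : List (ℕ → α)} {P : List (ℕ × α)} {m : ℕ} {a : α}
    (h : ∀ g ∈ L, g m ≠ a) : Extends L P ((m, a) :: P) :=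
  ⟨List.subset_cons_self _ _, fun x hx hxP => by
    obtain rfl := (List.mem_cons.mp hx).resolve_right hxP
    exact h⟩

theorem Admissible.exists_extends_mem_vals {P : List (ℕ × α)} {L : List (ℕ → α)}
    (hP : Admissible P L) (c : α) : ∃ Q, Extends L P Q ∧ Admissible Q L ∧ c ∈ vals Q := by
  by_cases hc : c ∈ vals P
  · exact ⟨P, Extends.refl L P, hP, hc⟩
  obtain ⟨m, hmK, hmL⟩ := (hP.2 c hc).nonempty
  exact ⟨(m, c) :: P, extends_cons hmL,
    hP.of_subset (hP.1.cons hmK hc) (List.subset_cons_self _ _), m, List.mem_cons_self⟩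

theorem Admissible.exists_extends_subset_vals [DecidableEq α] {P : List (ℕ × α)}
    {L : List (ℕ → α)} (hP : Admissible P L) (D : Finset α) :
    ∃ Q, Extends L P Q ∧ Admissible Q L ∧ ↑D ⊆ vals Q := by
  induction D using Finset.induction_on with
  | empty => exact ⟨P, Extends.refl L P, hP, by simp⟩
  | insert c D _ ih =>
    obtain ⟨Q, hPQ, hQ, hDQ⟩ := ih
    obtain ⟨R, hQR, hR, hcR⟩ := hQ.exists_extends_mem_vals c
    refine ⟨R, hPQ.trans hQR, hR, ?_⟩
    rw [Finset.coe_insert]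
    exact insert_subset hcR (hDQ.trans (vals_mono hQR.1))

theorem Admissible.exists_extends_mem_keys [Infinite α] {P : List (ℕ × α)}
    {L : List (ℕ → α)} (hP : Admissible P L) (n : ℕ) :
    ∃ Q, Extends L P Q ∧ Admissible Q L ∧ n ∈ keys Q := by
  by_cases hn : n ∈ keys P
  · exact ⟨P, Extends.refl L P, hP, hn⟩
  have hfin : (vals P ∪ (· n) '' {g | g ∈ L}).Finite :=
    (vals_finite P).union (L.finite_toSet.image _)
  obtain ⟨a, ha⟩ := hfin.infinite_compl.nonempty
  simp only [mem_compl_iff, mem_union, mem_image, not_or, not_exists, not_and] at ha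
  exact ⟨(n, a) :: P, extends_cons fun g hg => ha.2 g hg,
    hP.of_subset (hP.1.cons hn ha.1) (List.subset_cons_self _ _), a, List.mem_cons_self⟩

theorem Admissible.exists_extends_cons [Infinite α] {P : List (ℕ × α)} {L : List (ℕ → α)}
    (hP : Admissible P L) (g : ℕ → α) (n : ℕ) (c : α) :
    ∃ Q, Extends L P Q ∧ Admissible Q (g :: L) ∧ n ∈ keys Q ∧ c ∈ vals Q := by
  classical
  obtain ⟨Q₁, hPQ₁, hQ₁, hnQ₁⟩ := hP.exists_extends_mem_keys n
  let starved := (finite_setOf_slots_finite (keys_finite Q₁) (g :: L)).toFinset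
  obtain ⟨Q, hQ₁Q, hQ, hDQ⟩ := hQ₁.exists_extends_subset_vals (insert c starved)
  refine ⟨Q, hPQ₁.trans hQ₁Q, ⟨hQ.1, fun d hd => ?_⟩, keys_mono hQ₁Q.1 hnQ₁,
    hDQ (Finset.mem_insert_self c _)⟩
  have hd' : d ∉ starved := fun h => hd (hDQ (Finset.mem_insert_of_mem h))
  rw [Set.Finite.mem_toFinset, mem_ofPred_eq, Set.not_finite] at hd'
  exact slots_infinite_of_subset (keys_finite Q) hd'

def guesses (σ : ℕ → ℕ → α) : ℕ → List (ℕ → α)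
  | 0 => []
  | n + 1 => σ n :: guesses σ n

theorem mem_guesses {σ : ℕ → ℕ → α} {n : ℕ} {g : ℕ → α} :
    g ∈ guesses σ n ↔ ∃ j < n, σ j = g := by
  induction n with
  | zero => simp [guesses]
  | succ n ih =>
    simp only [guesses, List.mem_cons, ih]
    constructor
    · rintro (rfl | ⟨j, hj, rfl⟩)
      exacts [⟨n, n.lt_succ_self, rfl⟩, ⟨j, hj.trans n.lt_succ_self, rfl⟩]
    · rintro ⟨j, hj, rfl⟩
      rcases Nat.lt_succ_iff_lt_or_eq.mp hj with hj | rfl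
      exacts [Or.inr ⟨j, hj, rfl⟩, Or.inl rfl]

theorem guesses_congr {σ σ' : ℕ → ℕ → α} {n : ℕ} (h : ∀ j < n, σ j = σ' j) :
    guesses σ n = guesses σ' n := by
  induction n with
  | zero => rfl
  | succ n ih =>
    rw [guesses, guesses, h n n.lt_succ_self, ih fun j hj => h j (hj.trans n.lt_succ_self)]

def IsStrategy (G : (ℕ → α) → ℕ → (ℕ → α)) : Prop :=
  ∀ w w' : ℕ → α, ∀ k : ℕ,
    (∀ j < k, greenSet (G w j) w = greenSet (G w' j) w' ∧
        yellowSet (G w j) w = yellowSet (G w' j) w') →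
      G w k = G w' k

variable [Infinite α]

open Classical in
noncomputable def extendStep (n : ℕ) (c : α) (P : List (ℕ × α)) (L : List (ℕ → α))
    (g : ℕ → α) : List (ℕ × α) :=
  if h : Admissible P L then Classical.choose (h.exists_extends_cons g n c) else P

theorem Admissible.extendStep_spec {P : List (ℕ × α)} {L : List (ℕ → α)}
    (hP : Admissible P L) (g : ℕ → α) (n : ℕ) (c : α) :
    Extends L P (extendStep n c P L g) ∧ Admissible (extendStep n c P L g) (g :: L) ∧
      n ∈ keys (extendStep n c P L g) ∧ c ∈ vals (extendStep n c P L g) := by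
  rw [extendStep, dif_pos hP]
  exact Classical.choose_spec (hP.exists_extends_cons g n c)

noncomputable def stage (e : ℕ → α) (σ : ℕ → ℕ → α) : ℕ → List (ℕ × α)
  | 0 => []
  | n + 1 => extendStep n (e n) (stage e σ n) (guesses σ n) (σ n)

variable (e : ℕ → α) (σ : ℕ → ℕ → α)

theorem admissible_stage (n : ℕ) : Admissible (stage e σ n) (guesses σ n) := by
  induction n with
  | zero => exact admissible_nil
  | succ n ih => exact (ih.extendStep_spec (σ n) n (e n)).2.1

theorem stage_succ_spec (n : ℕ) :
    Extends (guesses σ n) (stage e σ n) (stage e σ (n + 1)) ∧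
      n ∈ keys (stage e σ (n + 1)) ∧ e n ∈ vals (stage e σ (n + 1)) :=
  let h := (admissible_stage e σ n).extendStep_spec (σ n) n (e n)
  ⟨h.1, h.2.2⟩

theorem extends_stage {k n : ℕ} (hkn : k ≤ n) :
    Extends (guesses σ k) (stage e σ k) (stage e σ n) := by
  induction n, hkn using Nat.le_induction with
  | base => exact Extends.refl _ _
  | succ n hkn ih =>
    refine ih.trans ((stage_succ_spec e σ n).1.mono fun g hg => ?_)
    obtain ⟨j, hj, rfl⟩ := mem_guesses.mp hg
    exact mem_guesses.mpr ⟨j, hj.trans_le hkn, rfl⟩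

theorem stage_congr {σ' : ℕ → ℕ → α} {n : ℕ} (h : ∀ j < n, σ j = σ' j) :
    stage e σ n = stage e σ' n := by
  induction n with
  | zero => rfl
  | succ n ih =>
    have h' : ∀ j < n, σ j = σ' j := fun j hj => h j (hj.trans n.lt_succ_self)
    rw [stage, stage, ih h', guesses_congr h', h n n.lt_succ_self]

noncomputable def codeword (m : ℕ) : α :=
  Classical.choose (stage_succ_spec e σ m).2.1

theorem codeword_mem_stage (m : ℕ) : (m, codeword e σ m) ∈ stage e σ (m + 1) :=
  Classical.choose_spec (stage_succ_spec e σ m).2.1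

theorem stage_mem_iff {k n m m' : ℕ} {a a' : α} (h : (m, a) ∈ stage e σ k)
    (h' : (m', a') ∈ stage e σ n) : m = m' ↔ a = a' :=
  (admissible_stage e σ (max k n)).1 _ ((extends_stage e σ (le_max_left k n)).1 h)
    _ ((extends_stage e σ (le_max_right k n)).1 h')

theorem codeword_eq_of_mem {n m : ℕ} {a : α} (h : (m, a) ∈ stage e σ n) :
    codeword e σ m = a :=
  (stage_mem_iff e σ (codeword_mem_stage e σ m) h).mp rfl

theorem bijective_codeword (he : Surjective e) : Bijective (codeword e σ) := by
  refine ⟨fun m m' h => (stage_mem_iff e σ (codeword_mem_stage e σ m)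
    (codeword_mem_stage e σ m')).mpr h, fun c => ?_⟩
  obtain ⟨n, rfl⟩ := he c
  obtain ⟨m, hm⟩ := (stage_succ_spec e σ n).2.2
  exact ⟨m, codeword_eq_of_mem e σ hm⟩

theorem ne_codeword_of_notMem_keys {j m : ℕ} (hm : m ∉ keys (stage e σ (j + 1))) :
    σ j m ≠ codeword e σ m := by
  have hmem := (extends_stage e σ (le_max_right (j + 1) (m + 1))).1 (codeword_mem_stage e σ m)
  exact (extends_stage e σ (le_max_left (j + 1) (m + 1))).2 _ hmem (fun h => hm ⟨_, h⟩) (σ j)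
    (mem_guesses.mpr ⟨j, j.lt_succ_self, rfl⟩)

theorem feedback_codeword_eq (he : Surjective e) {σ' : ℕ → ℕ → α} {j : ℕ}
    (h : ∀ i ≤ j, σ i = σ' i) :
    greenSet (σ j) (codeword e σ) = greenSet (σ j) (codeword e σ') ∧
      yellowSet (σ j) (codeword e σ) = yellowSet (σ j) (codeword e σ') := by
  have hstage : stage e σ (j + 1) = stage e σ' (j + 1) :=
    stage_congr e σ fun i hi => h i (Nat.lt_succ_iff.mp hi)
  refine feedback_eq_of_eqOn (bijective_codeword e σ he) (bijective_codeword e σ' he)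
    (K := keys (stage e σ (j + 1))) ?_ (fun m hm => ne_codeword_of_notMem_keys e σ hm)
    (fun m hm => ?_)
  · rintro m ⟨a, ha⟩
    rw [codeword_eq_of_mem e σ ha, codeword_eq_of_mem e σ' (hstage ▸ ha)]
  · rw [h j le_rfl]
    exact ne_codeword_of_notMem_keys e σ' (hstage ▸ hm)

/-- The guesses not yet made are replaced by an arbitrary word: `codeword` commits position `m`
after seeing only the first `m + 1` guesses. -/
noncomputable def diagonalPlay (G : (ℕ → α) → ℕ → (ℕ → α)) : ℕ → ℕ → α
  | k => G (codeword e fun j => if j < k then diagonalPlay G j else fun _ => e 0) k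

theorem strategy_codeword_eq_diagonalPlay {G : (ℕ → α) → ℕ → (ℕ → α)} (hG : IsStrategy G)
    (he : Surjective e) (k : ℕ) {σ : ℕ → ℕ → α} (hσ : ∀ j < k, σ j = diagonalPlay e G j) :
    G (codeword e σ) k = diagonalPlay e G k := by
  induction k using Nat.strong_induction_on generalizing σ with
  | _ k ih =>
    set τ : ℕ → ℕ → α := fun j => if j < k then diagonalPlay e G j else fun _ => e 0
    have hτ : ∀ j < k, τ j = diagonalPlay e G j := fun j hj => if_pos hj
    rw [diagonalPlay, hG _ (codeword e τ) k fun j hj => ?_]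
    rw [ih j hj fun i hi => hσ i (hi.trans hj), ih j hj fun i hi => hτ i (hi.trans hj)]
    have hστ : ∀ i ≤ j, σ i = τ i := fun i hi => by
      rw [hσ i (hi.trans_lt hj), hτ i (hi.trans_lt hj)]
    rw [← hσ j hj]
    exact feedback_codeword_eq e σ he hστ

end InfiniteWordle

open InfiniteWordle

/-- In infinite Wordle with the complete dictionary of all words `ℕ → α` over
a countably infinite alphabet `α`, no strategy of the codebreaker guarantees a
win at a finite stage: for every adaptive strategy (a guessing scheme whose
`k`-th guess depends only on the green/yellow feedback of earlier guesses)
there is a codeword that is never guessed at any finite stage. -/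
theorem wordle_complete_dictionary_no_finite_win (α : Type*)
    [Countable α] [Infinite α] :
    ∀ G : (ℕ → α) → ℕ → (ℕ → α),
      (∀ w w' : ℕ → α, ∀ k : ℕ,
        (∀ j < k, greenSet (G w j) w = greenSet (G w' j) w' ∧
            yellowSet (G w j) w = yellowSet (G w' j) w') →
          G w k = G w' k) →
      ∃ w : ℕ → α, ∀ k : ℕ, G w k ≠ w := by
  intro G hG
  obtain ⟨e, he⟩ := exists_surjective_nat α
  refine ⟨codeword e (diagonalPlay e G), fun k hk => ?_⟩
  rw [strategy_codeword_eq_diagonalPlay e hG he k fun _ _ => rfl] at hk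
  obtain ⟨m, hm⟩ := (keys_finite (stage e (diagonalPlay e G) (k + 1))).infinite_compl.nonempty
  exact ne_codeword_of_notMem_keys e _ hm (congrFun hk m)
end

section
/- In duplication-allowed infinite Mastermind with a countable set Σ of colors, the set of all constant words together with all nearly-constant words (constant except at one position) is a countable winning set: every codeword w ∈ ℕ → Σ is uniquely determined by the Mastermind feedback (correctness count, rearrangement count, inherent error count) to these guesswords. -/
/-- Permutations of the positions that act only on the incorrect positions of
the guess `s` against the codeword `w` (fixing all correct positions). -/
def IncorrectPerm {α : Type*} (s w : ℕ → α) : Type :=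
  {π : Equiv.Perm ℕ // ∀ n : ℕ, s n = w n → π n = n}

instance {α : Type*} (s w : ℕ → α) : Nonempty (IncorrectPerm s w) :=
  ⟨⟨Equiv.refl ℕ, fun _ _ => rfl⟩⟩

/-- The rearrangement count `ρ`: the greatest cardinal number of incorrect
positions of `s` that can be made correct by a permutation acting only on the
incorrect positions. -/
noncomputable def rearrangeCount {α : Type*} (s w : ℕ → α) : Cardinal :=
  ⨆ π : IncorrectPerm s w,
    Cardinal.mk {m : ℕ | s m ≠ w m ∧ s ((π.1).symm m) = w m}

/-- The inherent error count `ε`: the least cardinal number of positions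
remaining incorrect after a permutation acting only on the incorrect
positions. -/
noncomputable def errorCount {α : Type*} (s w : ℕ → α) : Cardinal :=
  ⨅ π : IncorrectPerm s w, Cardinal.mk {m : ℕ | s ((π.1).symm m) ≠ w m}

/-- The Mastermind feedback `(κ, ρ, ε)` of the guess `s` against the codeword
`w`: the correctness count, the rearrangement count and the inherent error
count. -/
noncomputable def masterFeedback {α : Type*} (s w : ℕ → α) :
    Cardinal × Cardinal × Cardinal :=
  (Cardinal.mk {n : ℕ | s n = w n}, rearrangeCount s w, errorCount s w)

/-- The constant words together with the nearly constant words (constant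
except at one position). -/
def ConstNearlyConst (α : Type*) : Set (ℕ → α) :=
  {s | (∃ c : α, s = fun _ => c) ∨
    ∃ (c b : α) (m : ℕ), s = Function.update (fun _ => c) m b}

/-!
The constant guess with colour `b` reveals whether `b` occurs in `w`. If it does and `c ≠ b`,
the guess that is constant `c` except for a `b` at position `n` has rearrangement count zero
exactly when `w n = b`: if `w n = b`, every admissible permutation fixes `n`, so it only moves
`c`'s onto positions where `c` is already wrong; otherwise swapping `n` with an occurrence of
`b` in `w` corrects that occurrence. Hence the feedback determines `w n` for every `n`.
-/

open Function

section Rearrangement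

variable {α : Type*} {s w : ℕ → α}

theorem rearrangeCount_eq_zero_iff :
    rearrangeCount s w = 0 ↔
      ∀ (π : IncorrectPerm s w) (m : ℕ), s m ≠ w m → s (π.1.symm m) ≠ w m := by
  rw [← nonpos_iff_eq_zero, rearrangeCount, ciSup_le_iff Cardinal.bddAbove_of_small]
  simp only [nonpos_iff_eq_zero, Cardinal.mk_eq_zero_iff, Set.isEmpty_coe_sort,
    Set.eq_empty_iff_forall_notMem, Set.mem_ofPred_eq, not_and]

variable {c b : α} {n : ℕ}

theorem rearrangeCount_update_const_eq_zero (hw : w n = b) :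
    rearrangeCount (update (fun _ => c) n b) w = 0 := by
  refine rearrangeCount_eq_zero_iff.2 fun π m hm => ?_
  have hπn : π.1.symm n = n := π.1.symm_apply_eq.2 (π.2 n (by rw [update_self, hw])).symm
  have hmn : m ≠ n := by rintro rfl; exact hm (by rw [update_self, hw])
  have hπmn : π.1.symm m ≠ n := fun h => hmn (π.1.symm.injective (h.trans hπn.symm))
  rw [update_of_ne hmn] at hm
  rwa [update_of_ne hπmn]

theorem rearrangeCount_update_const_ne_zero (hcb : c ≠ b) (hb : ∃ k, w k = b) (hn : w n ≠ b) :
    rearrangeCount (update (fun _ => c) n b) w ≠ 0 := by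
  obtain ⟨k, hk⟩ := hb
  have hkn : k ≠ n := by rintro rfl; exact hn hk
  have hsn : update (fun _ => c) n b n = b := update_self ..
  have hsk : update (fun _ => c) n b k = c := update_of_ne hkn ..
  have hswap : ∀ m, update (fun _ => c) n b m = w m → Equiv.swap n k m = m := by
    intro m hm
    refine Equiv.swap_apply_of_ne_of_ne ?_ ?_ <;> rintro rfl
    · exact hn (by rw [← hm, hsn])
    · exact hcb (by rw [← hsk, hm, hk])
  rw [Ne, rearrangeCount_eq_zero_iff]
  push Not
  refine ⟨⟨Equiv.swap n k, hswap⟩, k, by rwa [hsk, hk], ?_⟩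
  rw [Equiv.symm_swap, Equiv.swap_apply_right, hsn, hk]

end Rearrangement

theorem masterFeedback_const_fst_ne_zero_iff {α : Type*} (b : α) (w : ℕ → α) :
    (masterFeedback (fun _ => b) w).1 ≠ 0 ↔ ∃ k, w k = b := by
  simp only [masterFeedback, Cardinal.mk_ne_zero_iff, Set.nonempty_coe_sort, Set.Nonempty,
    Set.mem_ofPred_eq, eq_comm]

theorem constNearlyConst_countable (α : Type*) [Countable α] :
    (ConstNearlyConst α).Countable := by
  refine ((Set.countable_range fun c : α => fun _ : ℕ => c).union
    (Set.countable_range fun p : α × α × ℕ => update (fun _ => p.1) p.2.2 p.2.1)).mono ?_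
  rintro s (⟨c, rfl⟩ | ⟨c, b, m, rfl⟩)
  · exact Or.inl ⟨c, rfl⟩
  · exact Or.inr ⟨(c, b, m), rfl⟩

/-- In duplication-allowed infinite Mastermind with a countable set of colors,
the constant and nearly-constant words form a countable winning set: every
codeword is uniquely determined by its Mastermind feedback on these
guesswords. -/
theorem mastermind_const_nearlyconst_winning (α : Type*) [Countable α] :
    (ConstNearlyConst α).Countable ∧
      ∀ w w' : ℕ → α,
        (∀ s ∈ ConstNearlyConst α, masterFeedback s w = masterFeedback s w') →
          w = w' := by
  refine ⟨constNearlyConst_countable α, fun w w' h => funext fun n => ?_⟩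
  by_contra hne
  have hocc : ∃ k, w' k = w n := by
    rw [← masterFeedback_const_fst_ne_zero_iff, ← h _ (Or.inl ⟨w n, rfl⟩),
      masterFeedback_const_fst_ne_zero_iff]
    exact ⟨n, rfl⟩
  have hρ := congrArg (fun f => f.2.1) (h _ (Or.inr ⟨w' n, w n, n, rfl⟩))
  exact rearrangeCount_update_const_ne_zero (Ne.symm hne) hocc (Ne.symm hne)
    (hρ.symm.trans (rearrangeCount_update_const_eq_zero rfl))
end

section
/- In no-duplication infinite Mastermind over an uncountable color set Σ, for every countable ordinal γ and every codebreaker strategy, there exist two distinct injective codewords receiving identical feedback (0,0,ω) to all guesses made before stage γ; hence no strategy wins by any countable ordinal stage. -/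
/-! Fewer than `ω₁` guesses mention only countably many colours, so uncountably many colours
are fresh. An injective codeword in fresh colours shares no colour with any guess, which forces
the feedback `(0, 0, ω)`; composing it with a transposition gives a second such codeword. -/

lemma masterFeedback_of_disjoint {α : Type*} {s w : ℕ → α} (h : ∀ n m, s n ≠ w m) :
    masterFeedback s w = (0, 0, Cardinal.aleph0) := by
  have hκ : Cardinal.mk {n | s n = w n} = 0 :=
    Cardinal.mk_eq_zero_iff.mpr ⟨fun ⟨n, hn⟩ => h n n hn⟩
  have hρ : rearrangeCount s w = 0 :=
    le_antisymm (ciSup_le' fun _ =>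
      (Cardinal.mk_eq_zero_iff.mpr ⟨fun ⟨m, hm⟩ => h _ m hm.2⟩).le) zero_le
  have hε : errorCount s w = Cardinal.aleph0 := by
    have hall : ∀ π : IncorrectPerm s w,
        Cardinal.mk {m | s ((π.1).symm m) ≠ w m} = Cardinal.aleph0 := fun π => by
      simp only [ne_eq, h, not_false_eq_true, Set.ofPred_true, Cardinal.mk_univ, Cardinal.mk_nat]
    simp only [errorCount, hall, ciInf_const]
  rw [masterFeedback, hκ, hρ, hε]

lemma Set.Countable.not_countable_compl {α : Type*} [Uncountable α] {U : Set α}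
    (hU : U.Countable) : ¬ Uᶜ.Countable := fun hUc =>
  Set.not_countable_univ (by simpa using hU.union hUc)

lemma Set.Countable.exists_embedding_nat_compl {α : Type*} [Uncountable α] {U : Set α}
    (hU : U.Countable) : ∃ f : ℕ ↪ α, ∀ n, f n ∉ U := by
  let f : ℕ ↪ (Uᶜ : Set α) :=
    Set.Infinite.natEmbedding _ fun hfin => hU.not_countable_compl hfin.countable
  exact ⟨f.trans (Function.Embedding.subtype _), fun n => (f n).2⟩

lemma Ordinal.countable_Iio {γ : Ordinal} (hγ : γ.card ≤ Cardinal.aleph0) :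
    (Set.Iio γ).Countable := by
  rw [← Cardinal.le_aleph0_iff_set_countable, Cardinal.mk_Iio_ordinal]
  exact Cardinal.lift_le_aleph0.mpr hγ

lemma Function.Injective.comp_swap_ne {α β : Type*} [DecidableEq α] {f : α → β}
    (hf : f.Injective) {a b : α} (hab : a ≠ b) : f ∘ Equiv.swap a b ≠ f := fun h =>
  hab (hf (by simpa using congrFun h a)).symm

theorem mastermind_noduplication_no_countable_stage_win_general (α : Type*)
    [Uncountable α] (γ : Ordinal.{0}) (hγ : γ.card ≤ Cardinal.aleph0)
    (s : Ordinal.{0} → (ℕ → α)) :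
    ∃ c d : ℕ → α, Function.Injective c ∧ Function.Injective d ∧ c ≠ d ∧
      ∀ β < γ, masterFeedback (s β) c = (0, 0, Cardinal.aleph0) ∧
        masterFeedback (s β) d = (0, 0, Cardinal.aleph0) := by
  obtain ⟨f, hf⟩ := ((Ordinal.countable_Iio hγ).biUnion fun β _ =>
    Set.countable_range (s β)).exists_embedding_nat_compl
  have hfresh : ∀ β < γ, ∀ n m, s β n ≠ f m := fun β hβ n m hnm =>
    hf m (Set.mem_biUnion hβ ⟨n, hnm⟩)
  refine ⟨f, f ∘ Equiv.swap 0 1, f.injective, f.injective.comp (Equiv.injective _),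
    (f.injective.comp_swap_ne zero_ne_one).symm, fun β hβ =>
    ⟨masterFeedback_of_disjoint (hfresh β hβ),
      masterFeedback_of_disjoint fun n _ => hfresh β hβ n _⟩⟩

/-- In no-duplication infinite Mastermind over an uncountable color set, for
every countable ordinal `γ` and every transfinite sequence of (injective)
guesswords of length `γ` (in particular, the play of any strategy receiving
the constant feedback `(0,0,ω)`), there are two distinct injective codewords
giving the feedback `(0,0,ω)` to every guess made before stage `γ`; hence no
strategy wins by any countable ordinal stage. -/
theorem mastermind_noduplication_no_countable_stage_win (α : Type*)
    [Uncountable α] (γ : Ordinal.{0}) (hγ : γ.card ≤ Cardinal.aleph0)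
    (s : Ordinal.{0} → (ℕ → α)) (hs : ∀ β < γ, Function.Injective (s β)) :
    ∃ c d : ℕ → α, Function.Injective c ∧ Function.Injective d ∧ c ≠ d ∧
      ∀ β < γ, masterFeedback (s β) c = (0, 0, Cardinal.aleph0) ∧
        masterFeedback (s β) d = (0, 0, Cardinal.aleph0) :=
  mastermind_noduplication_no_countable_stage_win_general α γ hγ s
end

section
/- In simplified infinite Mastermind (feedback only the correctness count |{n : s n = w n}| and incorrectness count |{n : s n ≠ w n}| as elements of ℕ ∪ {ω}) with at least two colors, there is no countable winning set of guesswords: for any countable set S of guesswords there are two distinct codewords giving feedback (ω, ω) to every s ∈ S. -/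
lemma mk_eq_aleph0_of_inj (T : Set ℕ) (g : ℕ → ℕ) (hginj : Function.Injective g)
    (hg : ∀ k, g k ∈ T) : Cardinal.mk T = Cardinal.aleph0 := by
  have hinf : T.Infinite := Set.infinite_of_injective_forall_mem hginj hg
  have := hinf.to_subtype
  exact Cardinal.mk_eq_aleph0 T

lemma pair_pos_right (i k : ℕ) (hk : 0 < k) : 0 < Nat.pair i k := by
  unfold Nat.pair
  split <;> positivity

/-- In simplified infinite Mastermind (feedback is the pair of the correctness
count and the incorrectness count, as cardinals in `ℕ ∪ {ω}`) with at least
two colors, no countable set of guesswords is winning: for any countable set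
`S` there are two distinct codewords both giving feedback `(ω, ω)` to every
guessword in `S`. -/
theorem simplified_mastermind_no_countable_winning_set (α : Type*)
    [Nontrivial α] (S : Set (ℕ → α)) (hS : S.Countable) :
    ∃ c d : ℕ → α, c ≠ d ∧
      ∀ s ∈ S,
        Cardinal.mk {n : ℕ | s n = c n} = Cardinal.aleph0 ∧
        Cardinal.mk {n : ℕ | s n ≠ c n} = Cardinal.aleph0 ∧
        Cardinal.mk {n : ℕ | s n = d n} = Cardinal.aleph0 ∧
        Cardinal.mk {n : ℕ | s n ≠ d n} = Cardinal.aleph0 := by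
  obtain ⟨a, b, hab⟩ := exists_pair_ne α
  classical
  set other : α → α := fun x => if x = a then b else a with hother
  have hother_ne : ∀ x, other x ≠ x := by
    intro x
    by_cases h : x = a
    · simp [hother, h]; exact fun hh => hab hh.symm
    · simp [hother, h]; exact fun hh => h hh.symm
  rcases S.eq_empty_or_nonempty with hSe | hSne
  · refine ⟨fun _ => a, Function.update (fun _ => a) 0 b, ?_, ?_⟩
    · intro h
      have := congrFun h 0
      simp [Function.update] at this
      exact hab this
    · simp [hSe]
  · obtain ⟨f, hf⟩ := Set.Countable.exists_eq_range hS hSne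
    set c : ℕ → α := fun n =>
      if (Nat.unpair n).2 % 2 = 0 then f (Nat.unpair n).1 n
      else other (f (Nat.unpair n).1 n) with hc
    refine ⟨c, Function.update c 0 (other (c 0)), ?_, ?_⟩
    · intro h
      have := congrFun h 0
      simp [Function.update] at this
      exact hother_ne (c 0) this.symm
    · rintro s hs
      rw [hf] at hs
      obtain ⟨i, rfl⟩ := hs
      have hceq : ∀ k, f i (Nat.pair i (2 * k + 2)) = c (Nat.pair i (2 * k + 2)) := by
        intro k
        simp only [hc, Nat.unpair_pair]
        have : (2 * k + 2) % 2 = 0 := by omega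
        simp [this]
      have hcne : ∀ k, f i (Nat.pair i (2 * k + 1)) ≠ c (Nat.pair i (2 * k + 1)) := by
        intro k
        simp only [hc, Nat.unpair_pair]
        have : (2 * k + 1) % 2 = 1 := by omega
        simp [this]
        exact fun hh => hother_ne _ hh.symm
      have hinj_even : Function.Injective (fun k => Nat.pair i (2 * k + 2)) := by
        intro x y h
        have := Nat.pair_eq_pair.mp h
        omega
      have hinj_odd : Function.Injective (fun k => Nat.pair i (2 * k + 1)) := by
        intro x y h
        have := Nat.pair_eq_pair.mp h
        omega
      have hne_even : ∀ k, Nat.pair i (2 * k + 2) ≠ 0 := fun k =>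
        (pair_pos_right i _ (by omega)).ne'
      have hne_odd : ∀ k, Nat.pair i (2 * k + 1) ≠ 0 := fun k =>
        (pair_pos_right i _ (by omega)).ne'
      refine ⟨?_, ?_, ?_, ?_⟩
      · exact mk_eq_aleph0_of_inj _ _ hinj_even (fun k => hceq k)
      · exact mk_eq_aleph0_of_inj _ _ hinj_odd (fun k => hcne k)
      · refine mk_eq_aleph0_of_inj _ _ hinj_even (fun k => ?_)
        show f i _ = Function.update c 0 (other (c 0)) _
        rw [Function.update_of_ne (hne_even k)]
        exact hceq k
      · refine mk_eq_aleph0_of_inj _ _ hinj_odd (fun k => ?_)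
        show f i _ ≠ Function.update c 0 (other (c 0)) _
        rw [Function.update_of_ne (hne_odd k)]
        exact hcne k
end

section
/- If Martin's axiom holds, then every winning set of guesswords for no-duplication infinite Mastermind over a countably infinite color set has size continuum; equivalently, the mastermind number 𝕞 equals 𝔠 under MA. -/
/-- Martin's axiom: for every nonempty ccc partial order and every family of
fewer than continuum many (downward) dense subsets, there is a filter meeting
them all. -/
def MartinsAxiom : Prop :=
  ∀ (P : Type) [PartialOrder P], Nonempty P →
    (∀ A : Set P, (∀ p ∈ A, ∀ q ∈ A, p ≠ q → ¬∃ r : P, r ≤ p ∧ r ≤ q) →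
      A.Countable) →
    ∀ 𝒟 : Set (Set P), Cardinal.mk 𝒟 < Cardinal.continuum →
      (∀ D ∈ 𝒟, ∀ p : P, ∃ q ∈ D, q ≤ p) →
      ∃ F : Set P, F.Nonempty ∧
        (∀ p ∈ F, ∀ q ∈ F, ∃ r ∈ F, r ≤ p ∧ r ≤ q) ∧
        (∀ p ∈ F, ∀ q : P, p ≤ q → q ∈ F) ∧
        ∀ D ∈ 𝒟, (F ∩ D).Nonempty

/-!
Suppose `#S < 𝔠`. The forcing conditions — finite partial injections `ℕ → α` together with
finitely many forbidden colours — form a countable, hence ccc, poset, so Martin's axiom yields a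
filter meeting the fewer than `𝔠` dense sets that say: the codeword is total, and for each
`s ∈ S`, it agrees with `s` infinitely often, satisfies `c (2j+1) = s (2j) ≠ c (2j)` for infinitely
many `j`, and misses infinitely many colours of `s`. Against such a codeword every `s ∈ S` gets
feedback `(ℵ₀, ℵ₀, ℵ₀)`: the swaps `2j ↔ 2j+1` give infinitely many rearrangements, and the
missing colours are errors under every permutation. All three properties survive composing `c`
with the transposition `(0 1)`, which gives a second codeword with the same feedback.
-/

open Cardinal Filter Function Set

section Feedback

variable {α : Type}

lemma mk_setOf_eq_aleph0_of_frequently {p : ℕ → Prop} (h : ∃ᶠ n in atTop, p n) :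
    #{n | p n} = ℵ₀ :=
  have := (Nat.frequently_atTop_iff_infinite.1 h).to_subtype
  mk_eq_aleph0 _

lemma rearrangeCount_eq_aleph0 {s w : ℕ → α} {σ : ℕ → ℕ} (hσ : Involutive σ)
    (hfix : ∀ n, s n = w n → σ n = n) (h : ∃ᶠ n in atTop, s n ≠ w n ∧ s (σ n) = w n) :
    rearrangeCount s w = ℵ₀ := by
  have hbdd : BddAbove (range fun π : IncorrectPerm s w =>
      #{m | s m ≠ w m ∧ s (π.1.symm m) = w m}) :=
    ⟨ℵ₀, by rintro _ ⟨π, rfl⟩; exact mk_le_aleph0⟩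
  refine le_antisymm (ciSup_le' fun _ => mk_le_aleph0) ?_
  calc ℵ₀ = #{m | s m ≠ w m ∧ s (σ m) = w m} := (mk_setOf_eq_aleph0_of_frequently h).symm
    _ ≤ rearrangeCount s w := le_ciSup hbdd ⟨hσ.toPerm σ, hfix⟩

lemma errorCount_eq_aleph0 {s w : ℕ → α} (h : ∃ᶠ n in atTop, s n ∉ range w) :
    errorCount s w = ℵ₀ := by
  have key (π : IncorrectPerm s w) : #{m | s (π.1.symm m) ≠ w m} = ℵ₀ := by
    refine mk_setOf_eq_aleph0_of_frequently
      (π.1.injective.nat_tendsto_atTop.frequently (h.mono fun n hn => ?_))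
    rw [Equiv.symm_apply_apply]
    exact fun he => hn ⟨_, he.symm⟩
  simp only [errorCount, key, ciInf_const]

/-- The involution of `ℕ` exchanging `2 * j` and `2 * j + 1` for every `j ∈ J`. -/
def swapPairs (J : Set ℕ) [DecidablePred (· ∈ J)] (n : ℕ) : ℕ :=
  if n / 2 ∈ J then (if n % 2 = 0 then n + 1 else n - 1) else n

variable {J : Set ℕ} [DecidablePred (· ∈ J)]

lemma swapPairs_div_two (n : ℕ) : swapPairs J n / 2 = n / 2 := by
  unfold swapPairs; split_ifs <;> omega

lemma swapPairs_involutive : Involutive (swapPairs J) := by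
  intro n
  have hd := swapPairs_div_two (J := J) n
  generalize hm : swapPairs J n = m at hd ⊢
  unfold swapPairs at hm ⊢
  rw [hd]
  split_ifs at hm ⊢ <;> omega

lemma swapPairs_of_div_two_notMem {n : ℕ} (h : n / 2 ∉ J) : swapPairs J n = n := if_neg h

lemma swapPairs_two_mul_add_one {j : ℕ} (h : j ∈ J) : swapPairs J (2 * j + 1) = 2 * j := by
  have : (2 * j + 1) / 2 = j := by omega
  unfold swapPairs
  rw [this, if_pos h, if_neg (by omega)]
  omega

structure GenericAgainst (s w : ℕ → α) : Prop where
  frequently_eq : ∃ᶠ n in atTop, s n = w n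
  frequently_swap : ∃ᶠ j in atTop, w (2 * j + 1) = s (2 * j) ∧ w (2 * j) ≠ s (2 * j)
  frequently_notMem_range : ∃ᶠ n in atTop, s n ∉ range w

lemma masterFeedback_eq_of_genericAgainst {s w : ℕ → α} (hs : Injective s)
    (h : GenericAgainst s w) : masterFeedback s w = (ℵ₀, ℵ₀, ℵ₀) := by
  classical
  set J := {j | w (2 * j + 1) = s (2 * j) ∧ w (2 * j) ≠ s (2 * j)}
  have hfix (n : ℕ) (hn : s n = w n) : swapPairs J n = n := by
    refine swapPairs_of_div_two_notMem fun ⟨hodd, heven⟩ => ?_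
    obtain h | h : n = 2 * (n / 2) ∨ n = 2 * (n / 2) + 1 := by omega
    · exact heven (h ▸ hn).symm
    · have := hs ((h ▸ hn).trans hodd)
      omega
  have hswap : ∃ᶠ n in atTop, s n ≠ w n ∧ s (swapPairs J n) = w n := by
    have : Tendsto (fun j => 2 * j + 1) atTop atTop :=
      tendsto_atTop_mono (fun j => show j ≤ _ by omega) tendsto_id
    refine this.frequently (h.frequently_swap.mono fun j hj => ⟨?_, ?_⟩)
    · rw [hj.1]
      exact fun he => by have := hs he; omega
    · rw [swapPairs_two_mul_add_one hj, hj.1]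
  exact Prod.ext (mk_setOf_eq_aleph0_of_frequently h.frequently_eq)
    (Prod.ext (rearrangeCount_eq_aleph0 swapPairs_involutive hfix hswap)
      (errorCount_eq_aleph0 h.frequently_notMem_range))

lemma GenericAgainst.congr {s w w' : ℕ → α} (h : GenericAgainst s w) (hw : w' =ᶠ[atTop] w)
    (hr : range w' = range w) : GenericAgainst s w' where
  frequently_eq := h.frequently_eq.mp (hw.mono fun _ hn he => he.trans hn.symm)
  frequently_swap := by
    have hodd : ∀ᶠ j in atTop, w' (2 * j + 1) = w (2 * j + 1) :=
      (tendsto_atTop_mono (fun j => show j ≤ _ by omega) tendsto_id).eventually hw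
    have heven : ∀ᶠ j in atTop, w' (2 * j) = w (2 * j) :=
      (tendsto_atTop_mono (fun j => show j ≤ _ by omega) tendsto_id).eventually hw
    exact h.frequently_swap.mp ((hodd.and heven).mono fun _ hj hj' => by rwa [hj.1, hj.2])
  frequently_notMem_range := hr ▸ h.frequently_notMem_range

end Feedback

lemma eventually_notMem_of_injective {β : Type} {f : ℕ → β} (hf : Injective f) (T : Finset β) :
    ∀ᶠ n in atTop, f n ∉ T := by
  rw [← Nat.cofinite_eq_atTop]
  exact hf.tendsto_cofinite.eventually T.eventually_cofinite_notMem

lemma MartinsAxiom.exists_directedOn_meets (hMA : MartinsAxiom) {P : Type} [PartialOrder P]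
    [Countable P] [Nonempty P] {ι : Type} (hι : #ι < 𝔠) (D : ι → Set P)
    (hD : ∀ i p, ∃ q ∈ D i, q ≤ p) :
    ∃ G : Set P, DirectedOn (· ≥ ·) G ∧ ∀ i, (G ∩ D i).Nonempty := by
  obtain ⟨G, -, hG, -, hmeet⟩ := hMA P inferInstance (fun A _ => A.to_countable) (range D)
    (mk_range_le.trans_lt hι) (by rintro _ ⟨i, rfl⟩; exact hD i)
  exact ⟨G, hG, fun i => hmeet _ ⟨i, rfl⟩⟩

/-- A finite approximation of an injective codeword: a finite partial injection `ℕ → α`,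
given by its graph, together with finitely many colours the codeword must not use. -/
@[ext]
structure Approx (α : Type) where
  graph : Finset (ℕ × α)
  forbidden : Finset α
  injOn_fst : InjOn Prod.fst (graph : Set (ℕ × α))
  injOn_snd : InjOn Prod.snd (graph : Set (ℕ × α))
  snd_notMem_forbidden : ∀ x ∈ graph, x.2 ∉ forbidden

namespace Approx

variable {α : Type}

instance : PartialOrder (Approx α) :=
  PartialOrder.lift (fun p => OrderDual.toDual (p.graph, p.forbidden))
    fun _ _ h => Approx.ext (congrArg Prod.fst h) (congrArg Prod.snd h)

instance [Countable α] : Countable (Approx α) :=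
  Injective.countable (f := fun p : Approx α => (p.graph, p.forbidden))
    fun _ _ h => Approx.ext (congrArg Prod.fst h) (congrArg Prod.snd h)

instance : Nonempty (Approx α) := ⟨⟨∅, ∅, by simp, by simp, by simp⟩⟩

def dom (p : Approx α) : Finset ℕ := p.graph.image Prod.fst

lemma snd_eq_of_mem_graph {p : Approx α} {n : ℕ} {a b : α} (ha : (n, a) ∈ p.graph)
    (hb : (n, b) ∈ p.graph) : a = b :=
  congrArg Prod.snd (p.injOn_fst ha hb rfl)

lemma fst_eq_of_mem_graph {p : Approx α} {m n : ℕ} {a : α} (hm : (m, a) ∈ p.graph)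
    (hn : (n, a) ∈ p.graph) : m = n :=
  congrArg Prod.fst (p.injOn_snd hm hn rfl)

def Approximates (p : Approx α) (c : ℕ → α) : Prop :=
  (∀ x ∈ p.graph, c x.1 = x.2) ∧ ∀ a ∈ p.forbidden, a ∉ range c

lemma exists_injective_approximates {G : Set (Approx α)} (hG : DirectedOn (· ≥ ·) G)
    (hdom : ∀ n, ∃ p ∈ G, n ∈ p.dom) : ∃ c : ℕ → α, Injective c ∧ ∀ p ∈ G, p.Approximates c := by
  have : ∀ n, ∃ a, ∃ p ∈ G, (n, a) ∈ p.graph := fun n => by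
    obtain ⟨p, hp, hn⟩ := hdom n
    obtain ⟨x, hx, rfl⟩ := Finset.mem_image.1 hn
    exact ⟨x.2, p, hp, hx⟩
  choose c p hp hc using this
  refine ⟨c, fun m n hmn => ?_, fun q hq => ⟨fun x hx => ?_, fun a ha => ?_⟩⟩
  · obtain ⟨r, -, hrm, hrn⟩ := hG _ (hp m) _ (hp n)
    exact fst_eq_of_mem_graph (hrm.1 (hc m)) (hmn ▸ hrn.1 (hc n))
  · obtain ⟨r, -, hrq, hrx⟩ := hG _ hq _ (hp x.1)
    exact snd_eq_of_mem_graph (hrx.1 (hc x.1)) (hrq.1 hx)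
  · rintro ⟨n, rfl⟩
    obtain ⟨r, -, hrq, hrn⟩ := hG _ hq _ (hp n)
    exact r.snd_notMem_forbidden _ (hrn.1 (hc n)) (hrq.2 ha)

def witnessSet (s : ℕ → α) (N : ℕ) : Set (Approx α) :=
  {p | (∃ n ≥ N, (n, s n) ∈ p.graph) ∧
    (∃ j ≥ N, (2 * j + 1, s (2 * j)) ∈ p.graph ∧ ∃ b ≠ s (2 * j), (2 * j, b) ∈ p.graph) ∧
    ∃ n ≥ N, s n ∈ p.forbidden}

def denseFamily (S : Set (ℕ → α)) : Option S × ℕ → Set (Approx α)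
  | (none, n) => {p | n ∈ p.dom}
  | (some s, N) => witnessSet s N

lemma genericAgainst_of_approximates {s c : ℕ → α}
    (h : ∀ N, ∃ p ∈ witnessSet s N, p.Approximates c) : GenericAgainst s c where
  frequently_eq := frequently_atTop.2 fun N => by
    obtain ⟨p, ⟨⟨n, hn, hp⟩, -⟩, hc⟩ := h N
    exact ⟨n, hn, (hc.1 _ hp).symm⟩
  frequently_swap := frequently_atTop.2 fun N => by
    obtain ⟨p, ⟨-, ⟨j, hj, hodd, b, hb, heven⟩, -⟩, hc⟩ := h N
    exact ⟨j, hj, hc.1 _ hodd, (hc.1 _ heven).trans_ne hb⟩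
  frequently_notMem_range := frequently_atTop.2 fun N => by
    obtain ⟨p, ⟨-, -, n, hn, hp⟩, hc⟩ := h N
    exact ⟨n, hn, hc.2 _ hp⟩

section Extension

variable [DecidableEq α]

def ran (p : Approx α) : Finset α := p.graph.image Prod.snd

def extend (p : Approx α) (n : ℕ) (a : α) (hn : n ∉ p.dom) (ha : a ∉ p.ran)
    (haF : a ∉ p.forbidden) : Approx α where
  graph := insert (n, a) p.graph
  forbidden := p.forbidden
  injOn_fst := by
    rw [Finset.coe_insert, injOn_insert fun h => hn (Finset.mem_image_of_mem _ h)]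
    exact ⟨p.injOn_fst, by simpa [dom] using hn⟩
  injOn_snd := by
    rw [Finset.coe_insert, injOn_insert fun h => hn (Finset.mem_image_of_mem _ h)]
    exact ⟨p.injOn_snd, by simpa [ran] using ha⟩
  snd_notMem_forbidden := by
    simpa [haF] using p.snd_notMem_forbidden

lemma extend_le (p : Approx α) (n : ℕ) (a : α) (hn : n ∉ p.dom) (ha : a ∉ p.ran)
    (haF : a ∉ p.forbidden) : p.extend n a hn ha haF ≤ p :=
  ⟨Finset.subset_insert _ _, subset_rfl⟩

def forbid (p : Approx α) (a : α) (ha : a ∉ p.ran) : Approx α where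
  graph := p.graph
  forbidden := insert a p.forbidden
  injOn_fst := p.injOn_fst
  injOn_snd := p.injOn_snd
  snd_notMem_forbidden x hx := by
    simp only [Finset.mem_insert, not_or]
    exact ⟨fun h => ha (h ▸ Finset.mem_image_of_mem _ hx), p.snd_notMem_forbidden x hx⟩

lemma forbid_le (p : Approx α) (a : α) (ha : a ∉ p.ran) : p.forbid a ha ≤ p :=
  ⟨subset_rfl, Finset.subset_insert _ _⟩

variable {s : ℕ → α}

lemma exists_le_mem_dom [Infinite α] (p : Approx α) (n : ℕ) : ∃ q ≤ p, n ∈ q.dom := by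
  by_cases hn : n ∈ p.dom
  · exact ⟨p, le_rfl, hn⟩
  obtain ⟨a, ha⟩ := Infinite.exists_notMem_finset (p.ran ∪ p.forbidden)
  rw [Finset.mem_union, not_or] at ha
  exact ⟨p.extend n a hn ha.1 ha.2, p.extend_le .., by simp [dom, extend]⟩

lemma exists_le_agree (hs : Injective s) (p : Approx α) (N : ℕ) :
    ∃ q ≤ p, ∃ n ≥ N, (n, s n) ∈ q.graph := by
  obtain ⟨n, hN, hn, hsn⟩ := ((eventually_ge_atTop N).and
    ((eventually_notMem_of_injective injective_id p.dom).and
      (eventually_notMem_of_injective hs (p.ran ∪ p.forbidden)))).exists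
  rw [Finset.mem_union, not_or] at hsn
  exact ⟨p.extend n (s n) hn hsn.1 hsn.2, p.extend_le .., n, hN, Finset.mem_insert_self _ _⟩

lemma exists_le_swap [Infinite α] (hs : Injective s) (p : Approx α) (N : ℕ) :
    ∃ q ≤ p, ∃ j ≥ N, (2 * j + 1, s (2 * j)) ∈ q.graph ∧
      ∃ b ≠ s (2 * j), (2 * j, b) ∈ q.graph := by
  have heven : Injective fun j : ℕ => 2 * j := fun a b h => by simpa using h
  have hodd : Injective fun j : ℕ => 2 * j + 1 := fun a b h => by simpa using h
  obtain ⟨j, hN, h0, h1, hsj⟩ := ((eventually_ge_atTop N).and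
    ((eventually_notMem_of_injective heven p.dom).and
      ((eventually_notMem_of_injective hodd p.dom).and
        (eventually_notMem_of_injective (hs.comp heven) (p.ran ∪ p.forbidden))))).exists
  rw [Finset.mem_union, not_or] at hsj
  set q := p.extend (2 * j + 1) (s (2 * j)) h1 hsj.1 hsj.2
  obtain ⟨b, hb⟩ := Infinite.exists_notMem_finset (insert (s (2 * j)) (q.ran ∪ q.forbidden))
  rw [Finset.mem_insert, Finset.mem_union, not_or, not_or] at hb
  have h0' : 2 * j ∉ q.dom := by
    simp only [q, dom, extend, Finset.image_insert, Finset.mem_insert, not_or]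
    exact ⟨by omega, h0⟩
  exact ⟨q.extend (2 * j) b h0' hb.2.1 hb.2.2, (q.extend_le ..).trans (p.extend_le ..), j, hN,
    Finset.mem_insert_of_mem (Finset.mem_insert_self _ _), b, hb.1, Finset.mem_insert_self _ _⟩

lemma exists_le_forbid (hs : Injective s) (p : Approx α) (N : ℕ) :
    ∃ q ≤ p, ∃ n ≥ N, s n ∈ q.forbidden := by
  obtain ⟨n, hN, hn⟩ := ((eventually_ge_atTop N).and
    (eventually_notMem_of_injective hs p.ran)).exists
  exact ⟨p.forbid (s n) hn, p.forbid_le .., n, hN, Finset.mem_insert_self _ _⟩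

lemma exists_le_mem_witnessSet [Infinite α] (hs : Injective s) (p : Approx α) (N : ℕ) :
    ∃ q ≤ p, q ∈ witnessSet s N := by
  obtain ⟨q₁, h₁, n, hn, hq₁⟩ := exists_le_agree hs p N
  obtain ⟨q₂, h₂, j, hj, hq₂, b, hb, hq₂'⟩ := exists_le_swap hs q₁ N
  obtain ⟨q₃, h₃, k, hk, hq₃⟩ := exists_le_forbid hs q₂ N
  exact ⟨q₃, h₃.trans (h₂.trans h₁), ⟨n, hn, (h₃.trans h₂).1 hq₁⟩,
    ⟨j, hj, h₃.1 hq₂, b, hb, h₃.1 hq₂'⟩, k, hk, hq₃⟩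

lemma exists_mem_denseFamily_le [Infinite α] {S : Set (ℕ → α)} (hS : ∀ s ∈ S, Injective s) :
    ∀ i (p : Approx α), ∃ q ∈ denseFamily S i, q ≤ p
  | (none, n), p => let ⟨q, hq, hn⟩ := exists_le_mem_dom p n; ⟨q, hn, hq⟩
  | (some s, N), p => let ⟨q, hq, hN⟩ := exists_le_mem_witnessSet (hS s s.2) p N; ⟨q, hN, hq⟩

end Extension

end Approx

lemma mk_nat_arrow_eq_continuum (α : Type) [Countable α] [Infinite α] : #(ℕ → α) = 𝔠 := by
  simp [mk_eq_aleph0, aleph0_power_aleph0]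

lemma mk_option_prod_nat_lt_continuum {S : Type} (hS : #S < 𝔠) : #(Option S × ℕ) < 𝔠 := by
  simp only [mk_prod, mk_option, lift_id, mk_nat]
  exact mul_lt_of_lt aleph0_le_continuum
    (add_lt_of_lt aleph0_le_continuum hS (one_lt_aleph0.trans aleph0_lt_continuum))
    aleph0_lt_continuum

/-- Under Martin's axiom, every winning set of guesswords for no-duplication
infinite Mastermind over a countably infinite color set has size continuum:
the mastermind number `𝕞` equals `𝔠`. -/
theorem mastermind_number_eq_continuum_of_MA (α : Type) [Countable α]
    [Infinite α] (hMA : MartinsAxiom) (S : Set (ℕ → α))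
    (hinj : ∀ s ∈ S, Function.Injective s)
    (hwin : ∀ c d : ℕ → α, Function.Injective c → Function.Injective d →
      (∀ s ∈ S, masterFeedback s c = masterFeedback s d) → c = d) :
    Cardinal.mk S = Cardinal.continuum := by
  classical
  by_contra hne
  have hS : #S < 𝔠 := ((mk_set_le S).trans_eq (mk_nat_arrow_eq_continuum α)).lt_of_ne hne
  obtain ⟨G, hG, hmeet⟩ := hMA.exists_directedOn_meets (mk_option_prod_nat_lt_continuum hS)
    (Approx.denseFamily S) (Approx.exists_mem_denseFamily_le hinj)
  obtain ⟨c, hc, hcG⟩ := Approx.exists_injective_approximates hG fun n => hmeet (none, n)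
  have hgen (s : ℕ → α) (hs : s ∈ S) : GenericAgainst s c :=
    Approx.genericAgainst_of_approximates fun N =>
      let ⟨p, hpG, hp⟩ := hmeet (some ⟨s, hs⟩, N)
      ⟨p, hp, hcG p hpG⟩
  set d := c ∘ Equiv.swap 0 1
  have hdc : d =ᶠ[atTop] c := eventually_atTop.2
    ⟨2, fun n hn => congrArg c (Equiv.swap_apply_of_ne_of_ne (by omega) (by omega))⟩
  have hcd : c = d := hwin c d hc (hc.comp (Equiv.injective _)) fun s hs => by
    rw [masterFeedback_eq_of_genericAgainst (hinj s hs) (hgen s hs),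
      masterFeedback_eq_of_genericAgainst (hinj s hs)
        ((hgen s hs).congr hdc ((Equiv.surjective _).range_comp c))]
  exact zero_ne_one (hc ((congrFun hcd 0).trans (congrArg c (Equiv.swap_apply_left 0 1))))
end

section
/- The duplication-allowed correctness-only mastermind number is at most the eventually different number: if D ⊆ ℕ → ℕ is a family such that every function is eventually different from some member of D, then the set of all finite variations of members of D is a winning set for correctness-only simplified Mastermind, i.e., every codeword w is determined by the values |{n : s n = w n}| ∈ ℕ ∪ {ω} for s ranging over finite variations of members of D. -/
/-- If `D ⊆ ℕ → ℕ` is an eventually different family (every function agrees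
with some member of `D` at only finitely many positions), then the set of all
finite variations of members of `D` is a winning set for correctness-only
simplified Mastermind: every codeword is determined by its correctness counts
(in `ℕ ∪ {ω}`) against the finite variations of members of `D`. Hence the
duplication-allowed correctness-only mastermind number is at most the
eventually different number. -/
theorem correctness_only_winning_of_eventually_different
    (D : Set (ℕ → ℕ)) (hD : ∀ w : ℕ → ℕ, ∃ s ∈ D, {n : ℕ | s n = w n}.Finite) :
    ∀ w w' : ℕ → ℕ,
      (∀ t : ℕ → ℕ, (∃ s ∈ D, {n : ℕ | t n ≠ s n}.Finite) →
        Cardinal.mk {n : ℕ | t n = w n} = Cardinal.mk {n : ℕ | t n = w' n}) →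
      w = w' := by
  intro w w' h
  funext k
  by_contra hk
  obtain ⟨s, hsD, hA⟩ := hD w
  -- s is trivially a finite variation of itself
  have hsvar : ∃ s' ∈ D, {n : ℕ | s n ≠ s' n}.Finite := ⟨s, hsD, by simp⟩
  have hB : {n : ℕ | s n = w' n}.Finite := by
    have hEq := h s hsvar
    rw [← Cardinal.lt_aleph0_iff_set_finite] at hA ⊢
    rwa [← hEq]
  -- the modified guess
  set t : ℕ → ℕ := fun n =>
    if n = k then w k else if s n = w n ∨ s n = w' n then w n + w' n + 1 else s n
    with ht
  have htvar : {n : ℕ | t n ≠ s n}.Finite := by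
    apply Set.Finite.subset (((hA.union hB).union (Set.finite_singleton k)))
    intro n hn
    simp only [Set.mem_setOf_eq, ht] at hn
    by_cases h1 : n = k
    · exact Or.inr h1
    · by_cases h2 : s n = w n ∨ s n = w' n
      · exact Or.inl h2
      · simp [h1, h2] at hn
  have hW : {n : ℕ | t n = w n} = {k} := by
    ext n
    simp only [Set.mem_setOf_eq, Set.mem_singleton_iff, ht]
    constructor
    · intro hn
      by_contra h1
      rw [if_neg h1] at hn
      by_cases h2 : s n = w n ∨ s n = w' n
      · rw [if_pos h2] at hn; omega
      · rw [if_neg h2] at hn; exact h2 (Or.inl hn)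
    · intro hn; subst hn; simp
  have hW' : {n : ℕ | t n = w' n} = ∅ := by
    ext n
    simp only [Set.mem_setOf_eq, Set.mem_empty_iff_false, iff_false, ht]
    by_cases h1 : n = k
    · subst h1; simpa using hk
    · rw [if_neg h1]
      by_cases h2 : s n = w n ∨ s n = w' n
      · rw [if_pos h2]; omega
      · rw [if_neg h2]; exact fun hn => h2 (Or.inr hn)
  have := h t ⟨s, hsD, htvar⟩
  rw [hW, hW'] at this
  simp at this
end

section
/- If w : ℕ → ℕ is eventually different from s (agreement set of finite size k), then w is determined by the correctness counts with all finite variations of s: specifically, for each position m, w m = a iff changing s at position m to a yields agreement count k+1 (when s m ≠ a and s m ≠ w m) or keeps count k (when s m = a = w m); hence w is recoverable from these counts. -/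
/-!
Changing `s` at `m` to `a` removes `m` from the agreement set `{n | s n = w n}` and puts it back
exactly when `a = w m`. So when `s m` is wrong, the count of `s[m ↦ a]` exceeds that of `s` by one
precisely for `a = w m`. For uniqueness, if `w m ≠ w' m`, let `c` and `c'` be the sizes of the two
agreement sets with `m` removed: the guess `s[m ↦ w m]` gives `c + 1 = c'` and `s[m ↦ w' m]` gives
`c = c' + 1`, impossible since `c` is finite.
-/

open Function Cardinal

section UpdateAgreement

variable {α β : Type*} [DecidableEq α] {s w : α → β} {m : α} {a : β}

theorem setOf_update_eq_of_eq (h : w m = a) :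
    {n | update s m a n = w n} = insert m ({n | s n = w n} \ {m}) := by
  ext n
  by_cases hn : n = m
  · subst hn; simp [h]
  · simp [hn]

theorem setOf_update_eq_of_ne (h : w m ≠ a) :
    {n | update s m a n = w n} = {n | s n = w n} \ {m} := by
  ext n
  by_cases hn : n = m
  · subst hn; simp [Ne.symm h]
  · simp [hn]

theorem ncard_setOf_update_eq_of_eq (hfin : {n | s n = w n}.Finite) (hsw : s m ≠ w m)
    (h : w m = a) : {n | update s m a n = w n}.ncard = {n | s n = w n}.ncard + 1 := by
  have hm : m ∉ {n | s n = w n} := hsw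
  rw [setOf_update_eq_of_eq h, Set.sdiff_singleton_eq_self hm, Set.ncard_insert_of_notMem hm hfin]

theorem ncard_setOf_update_eq_of_ne (hsw : s m ≠ w m) (h : w m ≠ a) :
    {n | update s m a n = w n}.ncard = {n | s n = w n}.ncard := by
  rw [setOf_update_eq_of_ne h, Set.sdiff_singleton_eq_self (show m ∉ {n | s n = w n} from hsw)]

theorem eq_of_mk_setOf_update_eq {w' : α → β} (hfin : {n | s n = w n}.Finite)
    (h : ∀ m a, #{n | update s m a n = w n} = #{n | update s m a n = w' n}) : w = w' := by
  funext m
  by_contra hne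
  set B := {n | s n = w n} \ {m}
  set B' := {n | s n = w' n} \ {m}
  have hB : #B + 1 = #B' := by
    have := h m (w m)
    rwa [setOf_update_eq_of_eq rfl, setOf_update_eq_of_ne (Ne.symm hne),
      Cardinal.mk_insert (by simp)] at this
  have hB' : #B = #B' + 1 := by
    have := h m (w' m)
    rwa [setOf_update_eq_of_ne hne, setOf_update_eq_of_eq rfl,
      Cardinal.mk_insert (by simp)] at this
  obtain ⟨c, hc⟩ := Cardinal.lt_aleph0.mp (Cardinal.lt_aleph0_iff_set_finite.mpr hfin.sdiff)
  rw [← hB, hc] at hB'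
  norm_cast at hB'
  omega

end UpdateAgreement

/-- If `w` is eventually different from `s`, with agreement set of finite size
`k`, then `w` is determined by its correctness counts against the one-point
variations `s[m ↦ a]` of `s`: for `a` differing from `s m` with `s m` wrong,
`w m = a` iff the agreement count rises to `k + 1`; and any `w'` producing the
same correctness counts on all one-point variations of `s` equals `w`. -/
theorem determined_by_counts_on_finite_variations (s w : ℕ → ℕ) (k : ℕ)
    (hfin : {n : ℕ | s n = w n}.Finite) (hk : {n : ℕ | s n = w n}.ncard = k) :
    (∀ m a : ℕ, s m ≠ a → s m ≠ w m →
      (w m = a ↔ {n : ℕ | Function.update s m a n = w n}.ncard = k + 1)) ∧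
    (∀ m : ℕ, s m = w m →
      {n : ℕ | Function.update s m (s m) n = w n}.ncard = k) ∧
    ∀ w' : ℕ → ℕ,
      (∀ m a : ℕ,
        Cardinal.mk {n : ℕ | Function.update s m a n = w n} =
          Cardinal.mk {n : ℕ | Function.update s m a n = w' n}) →
      w = w' := by
  refine ⟨fun m a _ hsw => ⟨fun h => ?_, fun hcount => ?_⟩, fun m _ => by simp [hk],
    fun w' h => eq_of_mk_setOf_update_eq hfin h⟩
  · rw [ncard_setOf_update_eq_of_eq hfin hsw h, hk]
  · by_contra h
    rw [ncard_setOf_update_eq_of_ne hsw h, hk] at hcount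
    omega
end

section
/- If S is a winning set for duplication-allowed simplified infinite Mastermind over a countably infinite color set, then S together with, for each s ∈ S, a word s̄ that disagrees with s at every position, forms an eventually different family: every w : ℕ → ℕ is eventually different from some member of S ∪ {s̄ : s ∈ S}. Consequently 𝔡(≠*) ≤ 𝕞ₛ*. -/
/-!
If `w` agreed infinitely often and disagreed infinitely often with every `s ∈ S`, then changing
`w` at a single position would leave every feedback equal to `(ℵ₀, ℵ₀)`, contradicting that `S`
is winning. So some `s ∈ S` agrees with `w` only finitely often (and then `s` witnesses the
eventual difference) or disagrees with it only finitely often (and then `s̄` does, since `s̄`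
agrees with `w` only where `s` does not).

For the cardinal inequality, a countable family `{d i}` is never eventually different: the
diagonal `n ↦ d (unpair n).1 n` agrees with each `d i` on all of `{pair i m | m : ℕ}`. Hence for
a winning set `T` the eventually different family `T ∪ {s + 1 | s ∈ T}` is uncountable, so `T` is
too, and that family has cardinality at most `#T`.
-/

/-- `D` is an eventually different family: every function agrees with some
member of `D` at only finitely many positions. -/
def IsEDFamily (D : Set (ℕ → ℕ)) : Prop :=
  ∀ w : ℕ → ℕ, ∃ s ∈ D, {n : ℕ | s n = w n}.Finite

/-- The simplified Mastermind feedback of the guess `s` against the codeword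
`w`: the correctness and incorrectness counts, as cardinals in `ℕ ∪ {ω}`. -/
def simpFeedback (s w : ℕ → ℕ) : Cardinal × Cardinal :=
  (Cardinal.mk {n : ℕ | s n = w n}, Cardinal.mk {n : ℕ | s n ≠ w n})

/-- `S` is a winning set for duplication-allowed simplified infinite
Mastermind: the simplified feedback on `S` determines the codeword. -/
def IsWinningSimp (S : Set (ℕ → ℕ)) : Prop :=
  ∀ w w' : ℕ → ℕ, (∀ s ∈ S, simpFeedback s w = simpFeedback s w') → w = w'

open Cardinal Filter Set

lemma simpFeedback_eq_aleph0 {s w : ℕ → ℕ} (hagree : {n | s n = w n}.Infinite)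
    (hdisagree : {n | s n ≠ w n}.Infinite) : simpFeedback s w = (ℵ₀, ℵ₀) := by
  have := hagree.to_subtype
  have := hdisagree.to_subtype
  simp only [simpFeedback, mk_eq_aleph0]

lemma simpFeedback_eq_of_eventuallyEq {s w w' : ℕ → ℕ} (hw : w =ᶠ[cofinite] w')
    (hagree : {n | s n = w n}.Infinite) (hdisagree : {n | s n ≠ w n}.Infinite) :
    simpFeedback s w = simpFeedback s w' := by
  have transfer : ∀ {p : ℕ → ℕ → Prop}, {n | p (s n) (w n)}.Infinite →
      {n | p (s n) (w' n)}.Infinite := fun h =>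
    frequently_cofinite_iff_infinite.1 <|
      (frequently_cofinite_iff_infinite.2 h).mp (hw.mono fun n hn h => hn ▸ h)
  rw [simpFeedback_eq_aleph0 hagree hdisagree,
    simpFeedback_eq_aleph0 (transfer hagree) (transfer hdisagree)]

lemma IsWinningSimp.exists_finite_agree_or_disagree {S : Set (ℕ → ℕ)} (hS : IsWinningSimp S)
    (w : ℕ → ℕ) : ∃ s ∈ S, {n | s n = w n}.Finite ∨ {n | s n ≠ w n}.Finite := by
  by_contra! h
  set w' := Function.update w 0 (w 0 + 1)
  have hw : w =ᶠ[cofinite] w' :=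
    (eventually_cofinite_ne 0).mono fun n hn => (Function.update_of_ne hn _ _).symm
  have hww' : w = w' := hS w w' fun s hs =>
    simpFeedback_eq_of_eventuallyEq hw (h s hs).1 (h s hs).2
  simpa [w'] using congrFun hww' 0

theorem IsWinningSimp.isEDFamily_union_image {S : Set (ℕ → ℕ)} (hS : IsWinningSimp S)
    {sb : (ℕ → ℕ) → (ℕ → ℕ)} (hsb : ∀ s ∈ S, ∀ n : ℕ, sb s n ≠ s n) :
    IsEDFamily (S ∪ sb '' S) := by
  intro w
  obtain ⟨s, hs, hagree | hdisagree⟩ := hS.exists_finite_agree_or_disagree w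
  · exact ⟨s, .inl hs, hagree⟩
  · refine ⟨sb s, .inr ⟨s, hs, rfl⟩, hdisagree.subset fun n hn heq => ?_⟩
    exact hsb s hs n (hn.trans heq.symm)

theorem Set.Countable.not_isEDFamily {D : Set (ℕ → ℕ)} (hD : D.Countable) : ¬IsEDFamily D := by
  intro hED
  rcases D.eq_empty_or_nonempty with rfl | hne
  · obtain ⟨s, hs, -⟩ := hED 0
    exact hs
  obtain ⟨d, rfl⟩ := hD.exists_eq_range hne
  obtain ⟨_, ⟨i, rfl⟩, hfinite⟩ := hED fun n => d n.unpair.1 n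
  refine infinite_of_injective_forall_mem (f := Nat.pair i)
    (fun a b hab => (Nat.pair_eq_pair.1 hab).2) (fun m => ?_) hfinite
  simp [Nat.unpair_pair]

lemma isWinningSimp_univ : IsWinningSimp univ := by
  intro w w' h
  have hdisagree : #{n | w n ≠ w' n} = 0 := by
    simpa [simpFeedback] using (congrArg Prod.snd (h w (mem_univ w))).symm
  ext n
  by_contra hn
  exact (mk_set_eq_zero_iff.1 hdisagree).subset hn

lemma IsWinningSimp.exists_isEDFamily_mk_le {T : Set (ℕ → ℕ)} (hT : IsWinningSimp T) :
    ∃ D : Set (ℕ → ℕ), IsEDFamily D ∧ #D ≤ #T := by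
  have hD := hT.isEDFamily_union_image (sb := fun s n => s n + 1) fun s _ n => (s n).succ_ne_self
  have hT_aleph0 : ℵ₀ ≤ #T := by
    refine (lt_of_not_ge fun hle => ?_).le
    have hc := le_aleph0_iff_set_countable.1 hle
    exact (hc.union (hc.image _)).not_isEDFamily hD
  refine ⟨_, hD, ?_⟩
  calc #(T ∪ _ '' T : Set (ℕ → ℕ)) ≤ #T + #(_ '' T : Set (ℕ → ℕ)) := mk_union_le _ _
    _ ≤ #T + #T := add_le_add_right mk_image_le _
    _ = #T := add_eq_self hT_aleph0

/-- If `S` is winning for duplication-allowed simplified infinite Mastermind,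
and for each `s ∈ S` the word `sb s` disagrees with `s` everywhere, then
`S ∪ sb '' S` is an eventually different family. Consequently the eventually
different number `𝔡(≠*)` is at most the simplified mastermind number `𝕞ₛ*`. -/
theorem ed_family_of_winning_simplified (S : Set (ℕ → ℕ))
    (hS : IsWinningSimp S) (sb : (ℕ → ℕ) → (ℕ → ℕ))
    (hsb : ∀ s ∈ S, ∀ n : ℕ, sb s n ≠ s n) :
    IsEDFamily (S ∪ sb '' S) ∧
      sInf {c : Cardinal | ∃ D : Set (ℕ → ℕ), IsEDFamily D ∧ Cardinal.mk D = c}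
        ≤ sInf {c : Cardinal |
            ∃ T : Set (ℕ → ℕ), IsWinningSimp T ∧ Cardinal.mk T = c} := by
  refine ⟨hS.isEDFamily_union_image hsb, le_csInf ?_ ?_⟩
  · -- `sInf ∅ = 0` in `Cardinal`, so some winning set must exist
    exact ⟨_, univ, isWinningSimp_univ, rfl⟩
  rintro _ ⟨T, hT, rfl⟩
  obtain ⟨D, hD, hle⟩ := hT.exists_isEDFamily_mk_le
  exact csInf_le_of_le (OrderBot.bddBelow _) ⟨D, hD, rfl⟩ hle
end

section
/- For finitely many colors n ≥ 2, the eventually different number for the space ℕ → Fin n equals the continuum: every family D ⊆ ℕ → Fin n of size less than 𝔠 fails to be eventually different, i.e., there exists g : ℕ → Fin n having infinite agreement with every member of D. -/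
open Cardinal
open scoped Classical

/-- Coding space: a length `L` together with a coloring of length-`L` binary strings. -/
abbrev EDCode (n : ℕ) := Σ L : ℕ, ((Fin L → Bool) → Fin n)

/-- The perfect family: `edG n x` is the member of `ℕ → Fin n` coded by `x : ℕ → Bool`.
At a coordinate `k` encoding `⟨L, c⟩`, its value is `c` applied to the length-`L`
prefix of `x`. -/
noncomputable def edG (n : ℕ) [NeZero n] (x : ℕ → Bool) (k : ℕ) : Fin n :=
  if h : ∃ t : EDCode n, Encodable.encode t = k then
    h.choose.2 (fun j => x j)
  else 0

lemma edG_encode (n : ℕ) [NeZero n] (x : ℕ → Bool) (t : EDCode n) :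
    edG n x (Encodable.encode t) = t.2 (fun j => x j) := by
  have h : ∃ t' : EDCode n, Encodable.encode t' = Encodable.encode t := ⟨t, rfl⟩
  have hch : h.choose = t := Encodable.encode_injective h.choose_spec
  simp only [edG]
  rw [dif_pos h, hch]

/-- Key combinatorial lemma: no single `f` can have finite agreement with `n`
distinct members of the perfect family. -/
lemma edG_key (n : ℕ) [NeZero n] (f : ℕ → Fin n) (x : Fin n → (ℕ → Bool))
    (hx : Function.Injective x)
    (hfin : ∀ i, {k : ℕ | edG n (x i) k = f k}.Finite) : False := by
  classical
  -- a bound `L₀` below which all the `x i` are pairwise distinguished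
  have hdiff : ∀ i j : Fin n, i ≠ j → ∃ p, x i p ≠ x j p := by
    intro i j hij
    by_contra h
    push_neg at h
    exact hij (hx (funext h))
  set P : Fin n → Fin n → ℕ := fun i j =>
    if h : i ≠ j then (hdiff i j h).choose else 0 with hP
  set L₀ : ℕ := (Finset.univ.sup fun p : Fin n × Fin n => P p.1 p.2) + 1 with hL₀
  -- restrictions of the `x i` to length `m ≥ L₀` are injective
  have hres : ∀ m, L₀ ≤ m → Function.Injective
      (fun i : Fin n => (fun j : Fin m => x i (j : ℕ))) := by
    intro m hm i j hij
    by_contra hne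
    have hp := (hdiff i j hne).choose_spec
    have hPij : P i j = (hdiff i j hne).choose := by simp [hP, hne]
    have hlt : P i j < m := by
      calc P i j ≤ Finset.univ.sup fun p : Fin n × Fin n => P p.1 p.2 :=
            Finset.le_sup (f := fun p : Fin n × Fin n => P p.1 p.2) (Finset.mem_univ (i, j))
        _ < L₀ := by omega
        _ ≤ m := hm
    have := congrFun hij ⟨P i j, hlt⟩
    simp only at this
    rw [hPij] at this
    exact hp this
  -- colorings sending the restriction of `x i` to `i`
  set c : ∀ m : ℕ, (Fin m → Bool) → Fin n := fun m s =>
    if h : ∃ i, (fun j : Fin m => x i (j : ℕ)) = s then h.choose else 0 with hc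
  have hcval : ∀ m, L₀ ≤ m → ∀ i : Fin n,
      c m (fun j : Fin m => x i (j : ℕ)) = i := by
    intro m hm i
    have h : ∃ i', (fun j : Fin m => x i' (j : ℕ)) = (fun j : Fin m => x i (j : ℕ)) :=
      ⟨i, rfl⟩
    have := hres m hm h.choose_spec
    simp only [hc, dif_pos h, this]
  -- the coordinates coded by `⟨m, c m⟩`
  set k : ℕ → ℕ := fun m => Encodable.encode (⟨m, c m⟩ : EDCode n) with hk
  have hkinj : Function.Injective k := by
    intro a b hab
    have : (⟨a, c a⟩ : EDCode n) = ⟨b, c b⟩ := Encodable.encode_injective hab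
    exact congrArg Sigma.fst this
  have hgk : ∀ m, ∀ i : Fin n, edG n (x i) (k m) = c m (fun j : Fin m => x i (j : ℕ)) := by
    intro m i
    exact edG_encode n (x i) ⟨m, c m⟩
  -- the union of all agreement sets is finite, but the coordinates `k m`, `m ≥ L₀`
  -- form an infinite set, each of which lies in some agreement set: contradiction
  have hK : (⋃ i : Fin n, {k : ℕ | edG n (x i) k = f k}).Finite :=
    Set.finite_iUnion hfin
  have hS : (k '' Set.Ici L₀).Infinite :=
    Set.Infinite.image (Set.injOn_of_injective hkinj) (Set.Ici_infinite L₀)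
  obtain ⟨k₀, hk₀S, hk₀K⟩ := (hS.diff hK).nonempty
  obtain ⟨m, hm, rfl⟩ := hk₀S
  apply hk₀K
  refine Set.mem_iUnion.2 ⟨f (k m), ?_⟩
  show edG n (x (f (k m))) (k m) = f (k m)
  rw [hgk m (f (k m)), hcval m hm (f (k m))]

set_option maxHeartbeats 1000000 in
/-- For finitely many colors `n ≥ 2`, the eventually different number for the
space `ℕ → Fin n` is the continuum: every family `D` of size less than `𝔠`
fails to be eventually different, i.e. some `g : ℕ → Fin n` has infinite
agreement with every member of `D`. -/
theorem eventually_different_number_fin_eq_continuum (n : ℕ) (hn : 2 ≤ n)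
    (D : Set (ℕ → Fin n)) (hD : Cardinal.mk D < Cardinal.continuum) :
    ∃ g : ℕ → Fin n, ∀ f ∈ D, {k : ℕ | g k = f k}.Infinite := by
  classical
  haveI : NeZero n := ⟨by omega⟩
  -- for each `f`, the set of bad codes `x` is finite (in fact of size `< n`)
  have hbad : ∀ f : ℕ → Fin n, {x : ℕ → Bool | {k : ℕ | edG n x k = f k}.Finite}.Finite := by
    intro f
    by_contra h
    haveI := Set.Infinite.to_subtype h
    set e : Fin n ↪ {x : ℕ → Bool | {k : ℕ | edG n x k = f k}.Finite} :=
      (Fin.valEmbedding.trans (Infinite.natEmbedding _))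
    exact edG_key n f (fun i => (e i : ℕ → Bool))
      (fun i j hij => e.injective (Subtype.ext hij)) (fun i => (e i).2)
  -- the union over `f ∈ D` of bad sets has size `< 𝔠`
  have hcard : Cardinal.mk (⋃ f ∈ D, {x : ℕ → Bool | {k : ℕ | edG n x k = f k}.Finite})
      < Cardinal.continuum := by
    have h1 : (⨆ f : D, Cardinal.mk {x : ℕ → Bool | {k : ℕ | edG n x k = f.1 k}.Finite}) ≤ ℵ₀ :=
      ciSup_le' fun f => (hbad f.1).lt_aleph0.le
    have h2 : Cardinal.mk D * (⨆ f : D, Cardinal.mk {x : ℕ → Bool | {k : ℕ | edG n x k = f.1 k}.Finite})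
        ≤ Cardinal.mk D * ℵ₀ := mul_le_mul_right h1 _
    calc Cardinal.mk (⋃ f ∈ D, {x : ℕ → Bool | {k : ℕ | edG n x k = f k}.Finite})
        ≤ Cardinal.mk D * ⨆ f : D, Cardinal.mk {x : ℕ → Bool | {k : ℕ | edG n x k = f.1 k}.Finite} :=
          Cardinal.mk_biUnion_le _ _
      _ ≤ Cardinal.mk D * ℵ₀ := h2
      _ ≤ max (Cardinal.mk D) ℵ₀ * max (Cardinal.mk D) ℵ₀ :=
          mul_le_mul' (le_max_left _ _) (le_max_right _ _)
      _ = max (Cardinal.mk D) ℵ₀ :=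
          Cardinal.mul_eq_self (le_max_right _ _)
      _ < Cardinal.continuum := max_lt hD Cardinal.aleph0_lt_continuum
  -- hence some `x` lies in no bad set
  have hne : ∃ x : ℕ → Bool,
      x ∉ ⋃ f ∈ D, {x : ℕ → Bool | {k : ℕ | edG n x k = f k}.Finite} := by
    by_contra h
    push_neg at h
    have huniv : (⋃ f ∈ D, {x : ℕ → Bool | {k : ℕ | edG n x k = f k}.Finite})
        = Set.univ := Set.eq_univ_of_forall h
    rw [huniv] at hcard
    have : Cardinal.mk (ℕ → Bool) = Cardinal.continuum := by simp [Cardinal.mk_arrow]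
    rw [Cardinal.mk_univ, this] at hcard
    exact lt_irrefl _ hcard
  obtain ⟨x, hx⟩ := hne
  refine ⟨edG n x, fun f hf => ?_⟩
  intro hfin
  exact hx (Set.mem_biUnion hf hfin)
end

section
/- The incorrectness-only mastermind number equals the continuum: any set S of guesswords over a countable color set Σ (|Σ| ≥ 2) such that every codeword w is determined by the counts |{n : s n ≠ w n}| ∈ ℕ ∪ {ω} for s ∈ S must contain, for every codeword w, some s with {n : s n ≠ w n} finite; hence |S| ≥ 𝔠 since there are continuum many eventual-equality classes. -/
/-- The incorrectness-only mastermind number is the continuum: if `S` is a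
winning set for incorrectness-only infinite Mastermind over a countable color
set with at least two colors (every codeword is determined by its
incorrectness counts, in `ℕ ∪ {ω}`, against the guesswords in `S`), then for
every codeword some guessword in `S` differs from it at only finitely many
positions, and consequently `S` has size at least continuum. -/
theorem incorrectness_only_mastermind_number_continuum (α : Type*)
    [Countable α] [Nontrivial α] (S : Set (ℕ → α))
    (hwin : ∀ w w' : ℕ → α,
      (∀ s ∈ S, Cardinal.mk {n : ℕ | s n ≠ w n} =
        Cardinal.mk {n : ℕ | s n ≠ w' n}) → w = w') :
    (∀ w : ℕ → α, ∃ s ∈ S, {n : ℕ | s n ≠ w n}.Finite) ∧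
      Cardinal.continuum ≤ Cardinal.mk S := by
  have hfin : ∀ w : ℕ → α, ∃ s ∈ S, {n : ℕ | s n ≠ w n}.Finite := by
    intro w
    by_contra h
    push_neg at h
    obtain ⟨b, hb⟩ := exists_ne (w 0)
    set w' := Function.update w 0 b with hw'
    have hne : w ≠ w' := by
      intro he
      have : w 0 = b := by rw [he, hw']; simp
      exact hb this.symm
    apply hne
    apply hwin
    intro s hs
    have h1 : {n : ℕ | s n ≠ w n}.Infinite := h s hs
    have h2 : {n : ℕ | s n ≠ w' n}.Infinite := by
      apply Set.Infinite.mono (s := {n : ℕ | s n ≠ w n} \ {0})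
      · intro n hn
        simp only [Set.mem_diff, Set.mem_setOf_eq, Set.mem_singleton_iff] at hn
        have : w' n = w n := Function.update_of_ne hn.2 _ _
        simpa [this] using hn.1
      · exact h1.diff (Set.finite_singleton 0)
    have e1 : Cardinal.mk {n : ℕ | s n ≠ w n} = Cardinal.aleph0 := by
      have := Set.infinite_coe_iff.mpr h1
      exact Cardinal.mk_eq_aleph0 _
    have e2 : Cardinal.mk {n : ℕ | s n ≠ w' n} = Cardinal.aleph0 := by
      have := Set.infinite_coe_iff.mpr h2
      exact Cardinal.mk_eq_aleph0 _
    rw [e1, e2]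
  refine ⟨hfin, ?_⟩
  obtain ⟨a, b, hab⟩ := exists_pair_ne α
  set F : (ℕ → Bool) → (ℕ → α) := fun x n => if x (Nat.unpair n).1 then a else b with hF
  have hFdiff : ∀ x y : ℕ → Bool, x ≠ y → {n : ℕ | F x n ≠ F y n}.Infinite := by
    intro x y hxy
    obtain ⟨k, hk⟩ := Function.ne_iff.mp hxy
    apply Set.infinite_of_injective_forall_mem (f := fun m => Nat.pair k m)
    · intro m m' hm
      exact (Nat.pair_eq_pair.mp hm).2
    · intro m
      have hu : (Nat.unpair (Nat.pair k m)).1 = k := Nat.unpair_pair k m ▸ rfl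
      show F x (Nat.pair k m) ≠ F y (Nat.pair k m)
      simp only [hF, hu]
      cases hx : x k <;> cases hy : y k <;>
        first
          | (exfalso; rw [hx, hy] at hk; exact hk rfl)
          | simpa [hx, hy] using hab
          | simpa [hx, hy] using hab.symm
  choose g hgS hgfin using fun x => hfin (F x)
  have hginj : Function.Injective fun x : ℕ → Bool => (⟨g x, hgS x⟩ : S) := by
    intro x y hxy
    by_contra hne
    simp only [Subtype.mk.injEq] at hxy
    have hsub : {n : ℕ | F x n ≠ F y n} ⊆
        {n : ℕ | g x n ≠ F x n} ∪ {n : ℕ | g y n ≠ F y n} := by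
      intro n hn
      simp only [Set.mem_setOf_eq, Set.mem_union] at hn ⊢
      by_contra hc
      push_neg at hc
      exact hn (hc.1 ▸ hxy ▸ hc.2)
    exact hFdiff x y hne (((hgfin x).union (hgfin y)).subset hsub)
  have hmk : Cardinal.mk (ℕ → Bool) = Cardinal.continuum := by
    simp [Cardinal.mk_arrow, Cardinal.two_power_aleph0]
  have hle : Cardinal.lift.{u_1} (Cardinal.mk (ℕ → Bool)) ≤
      Cardinal.lift.{0} (Cardinal.mk S) :=
    Cardinal.lift_mk_le'.mpr ⟨⟨fun x => ⟨g x, hgS x⟩, hginj⟩⟩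
  rw [hmk, Cardinal.lift_continuum] at hle
  simpa using hle
end

section
/- Baire space ℕ → ℕ is homeomorphic to the subspace of injective functions ℕ → ℕ, via the map sending f to f̃ where f̃(n) is the f(n)-th element (in increasing order) of ℕ minus the range of f̃ restricted to n; this map is a bijection onto the injective functions, and it and its inverse are continuous. -/
/-- `tilde f n` is the `f n`-th element (in increasing order) of the
complement of `{tilde f 0, …, tilde f (n-1)}` in `ℕ`. -/
noncomputable def tilde (f : ℕ → ℕ) : ℕ → ℕ
  | n =>
    Nat.nth (fun m : ℕ => ∀ j : ℕ, (_ : j < n) → tilde f j ≠ m) (f n)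
  termination_by n => n
  decreasing_by assumption

lemma tilde_eq (f : ℕ → ℕ) (n : ℕ) :
    tilde f n = Nat.nth (fun m : ℕ => ∀ j : ℕ, j < n → tilde f j ≠ m) (f n) := by
  rw [tilde]

lemma infinite_avoid (g : ℕ → ℕ) (n : ℕ) :
    {m : ℕ | ∀ j : ℕ, j < n → g j ≠ m}.Infinite := by
  have hsub : {m : ℕ | ∀ j : ℕ, j < n → g j ≠ m}ᶜ ⊆ g '' (Set.Iio n) := by
    intro m hm
    simp only [Set.mem_compl_iff, Set.mem_setOf_eq, not_forall] at hm
    obtain ⟨j, hj, hne⟩ := hm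
    exact ⟨j, hj, by simpa using hne⟩
  have hfin : {m : ℕ | ∀ j : ℕ, j < n → g j ≠ m}ᶜ.Finite :=
    ((Set.finite_Iio n).image g).subset hsub
  simpa using hfin.infinite_compl

lemma tilde_spec (f : ℕ → ℕ) (n j : ℕ) (hj : j < n) : tilde f j ≠ tilde f n := by
  rw [tilde_eq f n]
  exact Nat.nth_mem_of_infinite (infinite_avoid (tilde f) n) (f n) j hj

lemma tilde_injective (f : ℕ → ℕ) : Function.Injective (tilde f) := by
  intro a b hab
  rcases lt_trichotomy a b with h | h | h
  · exact absurd hab (tilde_spec f b a h)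
  · exact h
  · exact absurd hab.symm (tilde_spec f a b h)

/-- The inverse of `tilde`. -/
noncomputable def untilde (g : ℕ → ℕ) (n : ℕ) : ℕ :=
  @Nat.count (fun m : ℕ => ∀ j : ℕ, j < n → g j ≠ m) (Classical.decPred _) (g n)

lemma untilde_tilde (f : ℕ → ℕ) : untilde (tilde f) = f := by
  funext n
  rw [untilde]
  letI := Classical.decPred (fun m : ℕ => ∀ j : ℕ, j < n → tilde f j ≠ m)
  rw [tilde_eq f n]
  exact Nat.count_nth_of_infinite (infinite_avoid (tilde f) n) (f n)

lemma tilde_untilde (g : ℕ → ℕ) (hg : Function.Injective g) : tilde (untilde g) = g := by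
  funext n
  induction n using Nat.strong_induction_on with
  | _ n ih =>
    rw [tilde_eq]
    have hpred : (fun m : ℕ => ∀ j : ℕ, j < n → tilde (untilde g) j ≠ m)
        = (fun m : ℕ => ∀ j : ℕ, j < n → g j ≠ m) := by
      funext m
      simp only [eq_iff_iff]
      constructor <;> intro h j hj <;> have := h j hj
      · rwa [ih j hj] at this
      · rwa [ih j hj]
    rw [hpred, untilde]
    letI := Classical.decPred (fun m : ℕ => ∀ j : ℕ, j < n → g j ≠ m)
    refine Nat.nth_count ?_
    intro j hj hne
    exact absurd (hg hne) hj.ne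

lemma tilde_local (f f' : ℕ → ℕ) (n : ℕ) (h : ∀ i ≤ n, f' i = f i) :
    tilde f' n = tilde f n := by
  induction n using Nat.strong_induction_on with
  | _ n ih =>
    rw [tilde_eq, tilde_eq]
    have hpred : (fun m : ℕ => ∀ j : ℕ, j < n → tilde f' j ≠ m)
        = (fun m : ℕ => ∀ j : ℕ, j < n → tilde f j ≠ m) := by
      funext m
      simp only [eq_iff_iff]
      have key : ∀ j < n, tilde f' j = tilde f j := fun j hj =>
        ih j hj (fun i hi => h i (hi.trans hj.le))
      constructor <;> intro hh j hj <;> have := hh j hj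
      · rwa [key j hj] at this
      · rwa [key j hj]
    rw [hpred, h n le_rfl]

lemma untilde_local (g g' : ℕ → ℕ) (n : ℕ) (h : ∀ i ≤ n, g' i = g i) :
    untilde g' n = untilde g n := by
  rw [untilde, untilde]
  have hpred : (fun m : ℕ => ∀ j : ℕ, j < n → g' j ≠ m)
      = (fun m : ℕ => ∀ j : ℕ, j < n → g j ≠ m) := by
    funext m
    simp only [eq_iff_iff]
    constructor <;> intro hh j hj <;> have := hh j hj
    · rwa [h j hj.le] at this
    · rwa [h j hj.le]
  rw [h n le_rfl]
  congr 1

lemma continuous_of_local (φ : (ℕ → ℕ) → ℕ → ℕ)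
    (hφ : ∀ f f' n, (∀ i ≤ n, f' i = f i) → φ f' n = φ f n) : Continuous φ := by
  refine continuous_pi fun n => ?_
  have : (fun f => φ f n)
      = (fun v : Fin (n + 1) → ℕ =>
          φ (fun i => if h : i < n + 1 then v ⟨i, h⟩ else 0) n)
        ∘ (fun f (i : Fin (n + 1)) => f i) := by
    funext f
    exact (hφ f _ n (fun i hi => dif_pos (Nat.lt_succ_of_le hi))).symm
  rw [this]
  exact (continuous_of_discreteTopology).comp
    (continuous_pi fun i => continuous_apply (i : ℕ))

/-- Baire space `ℕ → ℕ` is homeomorphic to its subspace of injective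
functions, via the map `f ↦ tilde f` sending `f` to the function whose `n`-th
value is the `f n`-th element of `ℕ` minus the previously used values. -/
theorem baire_homeomorphic_injective_baire :
    ∃ h : (ℕ → ℕ) ≃ₜ {g : ℕ → ℕ // Function.Injective g},
      ∀ f : ℕ → ℕ, (h f : ℕ → ℕ) = tilde f := by
  refine ⟨{ toFun := fun f => ⟨tilde f, tilde_injective f⟩
            invFun := fun g => untilde g.1
            left_inv := fun f => untilde_tilde f
            right_inv := fun g => Subtype.ext (tilde_untilde g.1 g.2)
            continuous_toFun := Continuous.subtype_mk
              (continuous_of_local tilde fun f f' n h => tilde_local f f' n h) _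
            continuous_invFun :=
              (continuous_of_local untilde fun g g' n h => untilde_local g g' n h).comp
                continuous_subtype_val },
        fun f => rfl⟩
end
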